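/- arXiv:2311.15738 — 10 statements merged into one kernel-verified Lean document; each statement's English description precedes it below -/
import Mathlib

section
/- Let (a_ℓ)_{ℓ∈ℕ₀} and (b_ℓ)_{ℓ∈ℕ₀} be sequences of nonnegative real numbers and let 0 < q < 1, 0 < δ < 1, and C₁, C₂ > 0 be constants such that, for all ℓ, N ∈ ℕ₀: (i) a_{ℓ+1} ≤ q·a_ℓ + b_ℓ, (ii) b_{ℓ+N} ≤ C₁·a_ℓ, and (iii) ∑_{ℓ'=ℓ}^{ℓ+N} b_{ℓ'}² ≤ C₂·(N+1)^{1−δ}·a_ℓ². Then (a_ℓ) is R-linearly convergent, i.e., there exist constants C_lin > 0 and 0 < q_lin < 1 such that a_{ℓ+n} ≤ C_lin·q_lin^n·a_ℓ for all ℓ, n ∈ ℕ₀. -/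
open Finset Filter

/-!
Unrolling (i) gives `a (ℓ + n) ≤ q ^ n * a ℓ + ∑ i < n, q ^ (n - 1 - i) * b (ℓ + i)`. Together
with (ii) this bounds the whole tail by `K * a ℓ` for a fixed `K`; together with (iii) and Young's
inequality for the geometric convolution it gives `∑ n ≤ N, a (ℓ + n) ^ 2 ≲ (N + 1) ^ (1 - δ) * a ℓ ^ 2`.
As `a (ℓ + N) ≤ K * a (ℓ + n)` for every `n ≤ N`, this forces
`(N + 1) * a (ℓ + N) ^ 2 ≲ K ^ 2 * (N + 1) ^ (1 - δ) * a ℓ ^ 2`, so `a (ℓ + N) ≤ a ℓ / 2` as soon as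
`(N + 1) ^ δ` is large. Iterating this fixed-step contraction, and using the uniform bound
in between, gives R-linear convergence.
-/

section

variable {a b : ℕ → ℝ} {q : ℝ}

lemma sum_range_pow_le_inv_one_sub (hq0 : 0 ≤ q) (hq1 : q < 1) (n : ℕ) :
    ∑ k ∈ range n, q ^ k ≤ (1 - q)⁻¹ := by
  have := geom_sum_Ico_le_of_lt_one (m := 0) (n := n) hq0 hq1
  rwa [← range_eq_Ico, pow_zero, one_div] at this

lemma sum_range_sum_range_pow_mul_le {c : ℕ → ℝ} (hq0 : 0 ≤ q) (hq1 : q < 1)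
    (hc : ∀ i, 0 ≤ c i) (m : ℕ) :
    ∑ n ∈ range m, ∑ i ∈ range n, q ^ (n - 1 - i) * c i ≤ (1 - q)⁻¹ * ∑ i ∈ range m, c i := by
  simp only [range_eq_Ico]
  rw [mul_sum, ← sum_Ico_Ico_comm' 0 m (fun i n => q ^ (n - 1 - i) * c i)]
  refine sum_le_sum fun i _ => ?_
  rw [← sum_mul, sum_Ico_eq_sum_range]
  have hexp : ∀ k, i + 1 + k - 1 - i = k := by omega
  simp only [hexp]
  exact mul_le_mul_of_nonneg_right (sum_range_pow_le_inv_one_sub hq0 hq1 _) (hc i)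

lemma le_pow_mul_add_sum_of_contraction (hq0 : 0 ≤ q)
    (h1 : ∀ ℓ, a (ℓ + 1) ≤ q * a ℓ + b ℓ) (ℓ n : ℕ) :
    a (ℓ + n) ≤ q ^ n * a ℓ + ∑ i ∈ range n, q ^ (n - 1 - i) * b (ℓ + i) := by
  induction n with
  | zero => simp
  | succ n ih =>
    have hshift : q * ∑ i ∈ range n, q ^ (n - 1 - i) * b (ℓ + i)
        = ∑ i ∈ range n, q ^ (n - i) * b (ℓ + i) := by
      rw [mul_sum]
      refine sum_congr rfl fun i hi => ?_
      rw [← mul_assoc, ← pow_succ']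
      have := mem_range.1 hi
      congr 2
      omega
    calc a (ℓ + (n + 1)) ≤ q * a (ℓ + n) + b (ℓ + n) := h1 (ℓ + n)
      _ ≤ q * (q ^ n * a ℓ + ∑ i ∈ range n, q ^ (n - 1 - i) * b (ℓ + i)) + b (ℓ + n) := by
        gcongr
      _ = q ^ (n + 1) * a ℓ + ∑ i ∈ range (n + 1), q ^ (n + 1 - 1 - i) * b (ℓ + i) := by
        rw [sum_range_succ, mul_add, hshift, Nat.add_sub_cancel, Nat.sub_self, pow_zero, pow_succ]
        ring

lemma sq_le_of_contraction (ha : ∀ ℓ, 0 ≤ a ℓ) (hq0 : 0 ≤ q) (hq1 : q < 1)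
    (h1 : ∀ ℓ, a (ℓ + 1) ≤ q * a ℓ + b ℓ) (ℓ n : ℕ) :
    a (ℓ + n) ^ 2 ≤ 2 * a ℓ ^ 2 * q ^ n
      + 2 * (1 - q)⁻¹ * ∑ i ∈ range n, q ^ (n - 1 - i) * b (ℓ + i) ^ 2 := by
  set S := ∑ i ∈ range n, q ^ (n - 1 - i) * b (ℓ + i)
  set T := ∑ i ∈ range n, q ^ (n - 1 - i) * b (ℓ + i) ^ 2
  have hT : 0 ≤ T := sum_nonneg fun i _ => by positivity
  have hS : S ^ 2 ≤ (1 - q)⁻¹ * T := calc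
    S ^ 2 ≤ (∑ i ∈ range n, q ^ (n - 1 - i)) * T :=
      sum_sq_le_sum_mul_sum_of_sq_le_mul _ (fun i _ => by positivity)
        (fun i _ => by positivity) (fun i _ => le_of_eq (by ring))
    _ ≤ (1 - q)⁻¹ * T := by
      gcongr
      rw [sum_range_reflect (q ^ ·)]
      exact sum_range_pow_le_inv_one_sub hq0 hq1 n
  have hqn : (q ^ n) ^ 2 ≤ q ^ n := by
    rw [sq]
    exact mul_le_of_le_one_left (by positivity) (pow_le_one₀ hq0 hq1.le)
  calc a (ℓ + n) ^ 2 ≤ (q ^ n * a ℓ + S) ^ 2 :=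
        pow_le_pow_left₀ (ha _) (le_pow_mul_add_sum_of_contraction hq0 h1 ℓ n) 2
    _ ≤ 2 * a ℓ ^ 2 * (q ^ n) ^ 2 + 2 * S ^ 2 := by nlinarith [sq_nonneg (q ^ n * a ℓ - S)]
    _ ≤ 2 * a ℓ ^ 2 * q ^ n + 2 * ((1 - q)⁻¹ * T) := by gcongr
    _ = _ := by ring

lemma sum_sq_le_of_contraction (ha : ∀ ℓ, 0 ≤ a ℓ) (hq0 : 0 ≤ q) (hq1 : q < 1)
    (h1 : ∀ ℓ, a (ℓ + 1) ≤ q * a ℓ + b ℓ) (ℓ m : ℕ) :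
    ∑ n ∈ range m, a (ℓ + n) ^ 2
      ≤ 2 * (1 - q)⁻¹ * a ℓ ^ 2 + 2 * (1 - q)⁻¹ ^ 2 * ∑ i ∈ range m, b (ℓ + i) ^ 2 := by
  calc ∑ n ∈ range m, a (ℓ + n) ^ 2
      ≤ ∑ n ∈ range m, (2 * a ℓ ^ 2 * q ^ n
          + 2 * (1 - q)⁻¹ * ∑ i ∈ range n, q ^ (n - 1 - i) * b (ℓ + i) ^ 2) :=
        sum_le_sum fun n _ => sq_le_of_contraction ha hq0 hq1 h1 ℓ n
    _ = 2 * a ℓ ^ 2 * ∑ n ∈ range m, q ^ n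
          + 2 * (1 - q)⁻¹ * ∑ n ∈ range m, ∑ i ∈ range n, q ^ (n - 1 - i) * b (ℓ + i) ^ 2 := by
        rw [sum_add_distrib, mul_sum, mul_sum]
    _ ≤ 2 * a ℓ ^ 2 * (1 - q)⁻¹
          + 2 * (1 - q)⁻¹ * ((1 - q)⁻¹ * ∑ i ∈ range m, b (ℓ + i) ^ 2) := by
        have h1q : 0 ≤ (1 - q)⁻¹ := inv_nonneg.2 (sub_nonneg.2 hq1.le)
        gcongr
        · exact sum_range_pow_le_inv_one_sub hq0 hq1 m
        · exact sum_range_sum_range_pow_mul_le hq0 hq1 (fun i => sq_nonneg (b (ℓ + i))) m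
    _ = _ := by ring

lemma le_mul_of_contraction {C : ℝ} (ha : ∀ ℓ, 0 ≤ a ℓ) (hq0 : 0 ≤ q) (hq1 : q < 1)
    (hC : 0 ≤ C) (h1 : ∀ ℓ, a (ℓ + 1) ≤ q * a ℓ + b ℓ) (h2 : ∀ ℓ N, b (ℓ + N) ≤ C * a ℓ)
    (ℓ n : ℕ) :
    a (ℓ + n) ≤ (1 + C / (1 - q)) * a ℓ := by
  have h1q : 0 < 1 - q := sub_pos.2 hq1
  induction n with
  | zero => exact le_mul_of_one_le_left (ha ℓ) (le_add_of_nonneg_right (div_nonneg hC h1q.le))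
  | succ n ih =>
    calc a (ℓ + (n + 1)) ≤ q * a (ℓ + n) + b (ℓ + n) := h1 (ℓ + n)
      _ ≤ q * ((1 + C / (1 - q)) * a ℓ) + C * a ℓ := by gcongr; exact h2 ℓ n
      _ = (1 + C / (1 - q) - (1 - q)) * a ℓ := by field_simp; ring
      _ ≤ (1 + C / (1 - q)) * a ℓ := mul_le_mul_of_nonneg_right (by linarith) (ha ℓ)

def IsRLinearConvergent (a : ℕ → ℝ) : Prop :=
  ∃ C ρ : ℝ, 0 < C ∧ 0 < ρ ∧ ρ < 1 ∧ ∀ ℓ n : ℕ, a (ℓ + n) ≤ C * ρ ^ n * a ℓ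

lemma isRLinearConvergent_of_le_mul_of_step {K ρ : ℝ} {N : ℕ} (ha : ∀ ℓ, 0 ≤ a ℓ)
    (hK0 : 0 < K) (hK : ∀ ℓ n, a (ℓ + n) ≤ K * a ℓ) (hρ0 : 0 < ρ) (hρ1 : ρ < 1)
    (hN : 0 < N) (hstep : ∀ ℓ, a (ℓ + N) ≤ ρ * a ℓ) :
    IsRLinearConvergent a := by
  have hpow : ∀ ℓ k, a (ℓ + k * N) ≤ ρ ^ k * a ℓ := by
    intro ℓ k
    induction k with
    | zero => simp
    | succ k ih =>
      calc a (ℓ + (k + 1) * N) = a (ℓ + k * N + N) := by ring_nf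
        _ ≤ ρ * (ρ ^ k * a ℓ) := (hstep _).trans (by gcongr)
        _ = ρ ^ (k + 1) * a ℓ := by ring
  refine ⟨K / ρ, ρ ^ (N : ℝ)⁻¹, by positivity, by positivity,
    Real.rpow_lt_one hρ0.le hρ1 (by positivity), fun ℓ n => ?_⟩
  set k := n / N
  have hρk : ρ ^ k * ρ ≤ (ρ ^ (N : ℝ)⁻¹) ^ n := by
    have hn : (n : ℝ) < N * (k + 1) := by exact_mod_cast Nat.lt_mul_div_succ n hN
    rw [← pow_succ, ← Real.rpow_natCast, ← Real.rpow_natCast, ← Real.rpow_mul hρ0.le]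
    refine Real.rpow_le_rpow_of_exponent_ge hρ0 hρ1.le ?_
    rw [inv_mul_le_iff₀ (by positivity)]
    push_cast
    linarith
  calc a (ℓ + n) = a (ℓ + k * N + n % N) := by rw [add_assoc, Nat.div_add_mod']
    _ ≤ K * (ρ ^ k * a ℓ) := (hK _ _).trans (by gcongr; exact hpow ℓ k)
    _ = K / ρ * (ρ ^ k * ρ) * a ℓ := by field_simp
    _ ≤ K / ρ * (ρ ^ (N : ℝ)⁻¹) ^ n * a ℓ := by gcongr; exact ha ℓ

lemma le_half_of_sum_sq_le {K S : ℝ} {ℓ N : ℕ} (ha : ∀ ℓ, 0 ≤ a ℓ)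
    (hK : ∀ ℓ n, a (ℓ + n) ≤ K * a ℓ)
    (hsum : ∑ n ∈ range (N + 1), a (ℓ + n) ^ 2 ≤ S * a ℓ ^ 2) (hN : 4 * K ^ 2 * S ≤ N + 1) :
    a (ℓ + N) ≤ a ℓ / 2 := by
  have hlast : ∀ n ∈ range (N + 1), a (ℓ + N) ^ 2 ≤ K ^ 2 * a (ℓ + n) ^ 2 := by
    intro n hn
    have hsplit : ℓ + N = ℓ + n + (N - n) := by have := mem_range.1 hn; omega
    rw [← mul_pow, hsplit]
    exact pow_le_pow_left₀ (ha _) (hK _ _) 2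
  have hsq : (N + 1) * a (ℓ + N) ^ 2 ≤ (N + 1) * (a ℓ / 2) ^ 2 := calc
    (N + 1) * a (ℓ + N) ^ 2 = ∑ n ∈ range (N + 1), a (ℓ + N) ^ 2 := by simp
    _ ≤ K ^ 2 * ∑ n ∈ range (N + 1), a (ℓ + n) ^ 2 := by rw [mul_sum]; exact sum_le_sum hlast
    _ ≤ K ^ 2 * (S * a ℓ ^ 2) := by gcongr
    _ = 4 * K ^ 2 * S * (a ℓ ^ 2 / 4) := by ring
    _ ≤ (N + 1) * (a ℓ ^ 2 / 4) := by gcongr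
    _ = (N + 1) * (a ℓ / 2) ^ 2 := by ring
  exact le_of_pow_le_pow_left₀ two_ne_zero (by linarith [ha ℓ])
    (le_of_mul_le_mul_left hsq (by positivity))

theorem isRLinearConvergent_of_sum_sq_le_rpow {K C δ : ℝ} (ha : ∀ ℓ, 0 ≤ a ℓ) (hK0 : 0 < K)
    (hK : ∀ ℓ n, a (ℓ + n) ≤ K * a ℓ) (hδ : 0 < δ)
    (hsum : ∀ ℓ N : ℕ,
      ∑ n ∈ range (N + 1), a (ℓ + n) ^ 2 ≤ C * ((N : ℝ) + 1) ^ (1 - δ) * a ℓ ^ 2) :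
    IsRLinearConvergent a := by
  obtain ⟨N, hNδ, hN⟩ : ∃ N : ℕ, 4 * K ^ 2 * C ≤ ((N : ℝ) + 1) ^ δ ∧ 1 ≤ N :=
    (((tendsto_rpow_atTop hδ).comp (tendsto_atTop_add_const_right _ 1
      tendsto_natCast_atTop_atTop)).eventually_ge_atTop _).and (eventually_ge_atTop 1) |>.exists
  refine isRLinearConvergent_of_le_mul_of_step ha hK0 hK (by norm_num : (0 : ℝ) < 1 / 2)
    (by norm_num) hN fun ℓ => ?_
  have hpos : (0 : ℝ) < N + 1 := by positivity
  have hstep : 4 * K ^ 2 * (C * ((N : ℝ) + 1) ^ (1 - δ)) ≤ N + 1 := calc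
    _ = 4 * K ^ 2 * C * ((N : ℝ) + 1) ^ (1 - δ) := by ring
    _ ≤ ((N : ℝ) + 1) ^ δ * ((N : ℝ) + 1) ^ (1 - δ) := by gcongr
    _ = N + 1 := by rw [← Real.rpow_add hpos, add_sub_cancel, Real.rpow_one]
  linarith [le_half_of_sum_sq_le ha hK (hsum ℓ N) hstep]

end

theorem tail_summability_criterion_general
    (a b : ℕ → ℝ) (ha : ∀ ℓ, 0 ≤ a ℓ)
    (q δ C₁ C₂ : ℝ)
    (hq0 : 0 < q) (hq1 : q < 1) (hδ0 : 0 < δ) (hδ1 : δ < 1)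
    (hC₁ : 0 < C₁)
    (h1 : ∀ ℓ : ℕ, a (ℓ + 1) ≤ q * a ℓ + b ℓ)
    (h2 : ∀ ℓ N : ℕ, b (ℓ + N) ≤ C₁ * a ℓ)
    (h3 : ∀ ℓ N : ℕ,
      ∑ i ∈ Finset.range (N + 1), (b (ℓ + i)) ^ 2
        ≤ C₂ * ((N : ℝ) + 1) ^ (1 - δ) * (a ℓ) ^ 2) :
    ∃ Clin qlin : ℝ, 0 < Clin ∧ 0 < qlin ∧ qlin < 1 ∧
      ∀ ℓ n : ℕ, a (ℓ + n) ≤ Clin * qlin ^ n * a ℓ := by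
  have hK0 : 0 < 1 + C₁ / (1 - q) := by
    have : 0 ≤ C₁ / (1 - q) := div_nonneg hC₁.le (sub_nonneg.2 hq1.le)
    linarith
  refine isRLinearConvergent_of_sum_sq_le_rpow (C := 2 * (1 - q)⁻¹ * (1 + (1 - q)⁻¹ * C₂)) ha hK0
    (le_mul_of_contraction ha hq0.le hq1 hC₁.le h1 h2) hδ0 fun ℓ N => ?_
  have hinv : 0 ≤ (1 - q)⁻¹ := inv_nonneg.2 (sub_nonneg.2 hq1.le)
  have hgrowth : 1 ≤ ((N : ℝ) + 1) ^ (1 - δ) :=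
    Real.one_le_rpow (by linarith [N.cast_nonneg (α := ℝ)]) (by linarith)
  calc ∑ n ∈ range (N + 1), a (ℓ + n) ^ 2
      ≤ 2 * (1 - q)⁻¹ * a ℓ ^ 2 + 2 * (1 - q)⁻¹ ^ 2 * ∑ i ∈ range (N + 1), b (ℓ + i) ^ 2 :=
        sum_sq_le_of_contraction ha hq0.le hq1 h1 ℓ (N + 1)
    _ ≤ 2 * (1 - q)⁻¹ * (((N : ℝ) + 1) ^ (1 - δ) * a ℓ ^ 2)
          + 2 * (1 - q)⁻¹ ^ 2 * (C₂ * ((N : ℝ) + 1) ^ (1 - δ) * a ℓ ^ 2) := by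
        gcongr
        · exact le_mul_of_one_le_left (sq_nonneg _) hgrowth
        · exact h3 ℓ N
    _ = _ := by ring

/-- Tail summability criterion for R-linear convergence
(Lemma `summability:criterion`). -/
theorem tail_summability_criterion
    (a b : ℕ → ℝ) (ha : ∀ ℓ, 0 ≤ a ℓ) (hb : ∀ ℓ, 0 ≤ b ℓ)
    (q δ C₁ C₂ : ℝ)
    (hq0 : 0 < q) (hq1 : q < 1) (hδ0 : 0 < δ) (hδ1 : δ < 1)
    (hC₁ : 0 < C₁) (hC₂ : 0 < C₂)
    (h1 : ∀ ℓ : ℕ, a (ℓ + 1) ≤ q * a ℓ + b ℓ)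
    (h2 : ∀ ℓ N : ℕ, b (ℓ + N) ≤ C₁ * a ℓ)
    (h3 : ∀ ℓ N : ℕ,
      ∑ i ∈ Finset.range (N + 1), (b (ℓ + i)) ^ 2
        ≤ C₂ * ((N : ℝ) + 1) ^ (1 - δ) * (a ℓ) ^ 2) :
    ∃ Clin qlin : ℝ, 0 < Clin ∧ 0 < qlin ∧ qlin < 1 ∧
      ∀ ℓ n : ℕ, a (ℓ + n) ≤ Clin * qlin ^ n * a ℓ :=
  tail_summability_criterion_general a b ha q δ C₁ C₂ hq0 hq1 hδ0 hδ1 hC₁ h1 h2 h3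
end

section
/- Let (a_ℓ)_{ℓ∈ℕ₀} be a sequence of nonnegative real numbers and let m > 0. Then the following two statements are equivalent: (i) tail summability: there exists a constant C_m > 0 such that ∑_{ℓ'=ℓ+1}^{∞} a_{ℓ'}^m ≤ C_m·a_ℓ^m for all ℓ ∈ ℕ₀; (ii) R-linear convergence: there exist constants C_lin > 0 and 0 < q_lin < 1 such that a_{ℓ+n} ≤ C_lin·q_lin^n·a_ℓ for all ℓ, n ∈ ℕ₀. -/
private lemma pow_rpow_comm (x : ℝ) (hx : 0 ≤ x) (y : ℝ) (n : ℕ) :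
    ((x ^ n : ℝ) : ℝ) ^ y = (x ^ y) ^ n := by
  rw [← Real.rpow_natCast x n, ← Real.rpow_mul hx, mul_comm, Real.rpow_mul hx,
    Real.rpow_natCast]

/-- Tail summability is equivalent to R-linear convergence
(Lemma `summability`). -/
theorem tail_summability_iff_Rlinear
    (a : ℕ → ℝ) (ha : ∀ ℓ, 0 ≤ a ℓ) (m : ℝ) (hm : 0 < m) :
    (∃ Cm : ℝ, 0 < Cm ∧ ∀ ℓ : ℕ,
        (∑' k : ℕ, ENNReal.ofReal ((a (ℓ + 1 + k)) ^ m))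
          ≤ ENNReal.ofReal (Cm * (a ℓ) ^ m))
      ↔
    (∃ Clin qlin : ℝ, 0 < Clin ∧ 0 < qlin ∧ qlin < 1 ∧
        ∀ ℓ n : ℕ, a (ℓ + n) ≤ Clin * qlin ^ n * a ℓ) := by
  constructor
  · rintro ⟨C, hC, hsum⟩
    set f : ℕ → ℕ → ℝ := fun ℓ k => a (ℓ + 1 + k) ^ m with hf
    have hfnn : ∀ ℓ k, 0 ≤ f ℓ k := fun ℓ k => Real.rpow_nonneg (ha _) m
    have hfin : ∀ ℓ, (∑' k, ENNReal.ofReal (f ℓ k)) ≠ ⊤ :=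
      fun ℓ => (lt_of_le_of_lt (hsum ℓ) ENNReal.ofReal_lt_top).ne
    have hsummable : ∀ ℓ, Summable (f ℓ) := by
      intro ℓ
      have h := ENNReal.summable_toReal (hfin ℓ)
      have : (fun k => (ENNReal.ofReal (f ℓ k)).toReal) = f ℓ := by
        funext k; exact ENNReal.toReal_ofReal (hfnn ℓ k)
      rwa [this] at h
    set S : ℕ → ℝ := fun ℓ => ∑' k, f ℓ k with hS
    have hSnn : ∀ ℓ, 0 ≤ S ℓ := fun ℓ => tsum_nonneg (hfnn ℓ)
    have hSle : ∀ ℓ, S ℓ ≤ C * a ℓ ^ m := by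
      intro ℓ
      have h := hsum ℓ
      rw [← ENNReal.ofReal_tsum_of_nonneg (hfnn ℓ) (hsummable ℓ)] at h
      exact (ENNReal.ofReal_le_ofReal_iff
        (mul_nonneg hC.le (Real.rpow_nonneg (ha ℓ) m))).mp h
    have hstep : ∀ ℓ, S ℓ = a (ℓ + 1) ^ m + S (ℓ + 1) := by
      intro ℓ
      have h0 : S ℓ = f ℓ 0 + ∑' k, f ℓ (k + 1) := Summable.tsum_eq_zero_add (hsummable ℓ)
      have h1 : (fun k => f ℓ (k + 1)) = f (ℓ + 1) := by
        funext k
        have he : ℓ + 1 + (k + 1) = ℓ + 1 + 1 + k := by omega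
        simp only [hf, he]
      rw [h0, h1]
    have hterm : ∀ ℓ, a (ℓ + 1) ^ m ≤ S ℓ := by
      intro ℓ
      have h := Summable.le_tsum (hsummable ℓ) 0 (fun j _ => hfnn ℓ j)
      simpa [hf] using h
    set q : ℝ := C / (C + 1) with hqdef
    have hq0 : 0 < q := div_pos hC (by linarith)
    have hq1 : q < 1 := (div_lt_one (by linarith)).mpr (by linarith)
    have hcontract : ∀ ℓ, S (ℓ + 1) ≤ q * S ℓ := by
      intro ℓ
      have h1 := hSle (ℓ + 1)
      have h2 := hstep ℓ
      have h3 : a (ℓ + 1) ^ m = S ℓ - S (ℓ + 1) := by linarith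
      rw [h3] at h1
      rw [hqdef, div_mul_eq_mul_div, le_div_iff₀ (by linarith : (0:ℝ) < C + 1)]
      nlinarith
    have hpow : ∀ ℓ n, S (ℓ + n) ≤ q ^ n * S ℓ := by
      intro ℓ n
      induction n with
      | zero => simp
      | succ n ih =>
        have h1 : S (ℓ + (n + 1)) = S ((ℓ + n) + 1) := by congr 1
        rw [h1]
        calc S ((ℓ + n) + 1) ≤ q * S (ℓ + n) := hcontract (ℓ + n)
          _ ≤ q * (q ^ n * S ℓ) := by
              exact mul_le_mul_of_nonneg_left ih hq0.le
          _ = q ^ (n + 1) * S ℓ := by ring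
    -- now extract the linear rate
    set qlin : ℝ := q ^ (1 / m) with hqlin
    have hqlin0 : 0 < qlin := Real.rpow_pos_of_pos hq0 _
    have hqlin1 : qlin < 1 :=
      Real.rpow_lt_one hq0.le hq1 (by positivity)
    set Clin : ℝ := max 1 (C ^ (1 / m) / qlin) with hClin
    have hClin1 : (1:ℝ) ≤ Clin := le_max_left _ _
    have hClin0 : 0 < Clin := lt_of_lt_of_le one_pos hClin1
    refine ⟨Clin, qlin, hClin0, hqlin0, hqlin1, ?_⟩
    intro ℓ n
    cases n with
    | zero =>
      simp only [Nat.add_zero, pow_zero, mul_one]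
      nlinarith [ha ℓ]
    | succ n =>
      have key : a (ℓ + (n + 1)) ^ m ≤ C * q ^ n * a ℓ ^ m := by
        have h1 : a (ℓ + (n + 1)) ^ m ≤ S (ℓ + n) := by
          have := hterm (ℓ + n)
          have he : (ℓ + n) + 1 = ℓ + (n + 1) := by omega
          rwa [he] at this
        have h2 := hpow ℓ n
        have h3 := hSle ℓ
        calc a (ℓ + (n + 1)) ^ m ≤ S (ℓ + n) := h1
          _ ≤ q ^ n * S ℓ := h2
          _ ≤ q ^ n * (C * a ℓ ^ m) := by
              exact mul_le_mul_of_nonneg_left h3 (pow_nonneg hq0.le n)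
          _ = C * q ^ n * a ℓ ^ m := by ring
      -- apply x ↦ x ^ (1/m)
      have hmne : m ≠ 0 := hm.ne'
      have hrhsnn : 0 ≤ C * q ^ n * a ℓ ^ m :=
        mul_nonneg (mul_nonneg hC.le (pow_nonneg hq0.le n)) (Real.rpow_nonneg (ha ℓ) m)
      have key2 : (a (ℓ + (n + 1)) ^ m) ^ (1 / m)
          ≤ (C * q ^ n * a ℓ ^ m) ^ (1 / m) :=
        Real.rpow_le_rpow (Real.rpow_nonneg (ha _) m) key (by positivity)
      have hl : (a (ℓ + (n + 1)) ^ m) ^ (1 / m) = a (ℓ + (n + 1)) := by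
        rw [← Real.rpow_mul (ha _), mul_one_div_cancel hmne, Real.rpow_one]
      have hr : (C * q ^ n * a ℓ ^ m) ^ (1 / m)
          = C ^ (1 / m) * qlin ^ n * a ℓ := by
        rw [Real.mul_rpow (mul_nonneg hC.le (pow_nonneg hq0.le n))
              (Real.rpow_nonneg (ha ℓ) m),
            Real.mul_rpow hC.le (pow_nonneg hq0.le n),
            pow_rpow_comm q hq0.le (1 / m) n,
            ← Real.rpow_mul (ha ℓ), mul_one_div_cancel hmne, Real.rpow_one]
      rw [hl, hr] at key2
      calc a (ℓ + (n + 1)) ≤ C ^ (1 / m) * qlin ^ n * a ℓ := key2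
        _ = (C ^ (1 / m) / qlin) * qlin ^ (n + 1) * a ℓ := by
            field_simp
            ring
        _ ≤ Clin * qlin ^ (n + 1) * a ℓ := by
            apply mul_le_mul_of_nonneg_right _ (ha ℓ)
            exact mul_le_mul_of_nonneg_right (le_max_right _ _)
              (pow_nonneg hqlin0.le _)
  · rintro ⟨Clin, qlin, hClin, hq0, hq1, hlin⟩
    set r : ℝ := qlin ^ m with hr
    have hr0 : 0 < r := Real.rpow_pos_of_pos hq0 m
    have hr1 : r < 1 := Real.rpow_lt_one hq0.le hq1 hm
    refine ⟨Clin ^ m * r * (1 - r)⁻¹,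
      mul_pos (mul_pos (Real.rpow_pos_of_pos hClin m) hr0)
        (inv_pos.mpr (by linarith)), fun ℓ => ?_⟩
    have hBnn : 0 ≤ Clin ^ m * a ℓ ^ m * r :=
      mul_nonneg (mul_nonneg (Real.rpow_nonneg hClin.le m)
        (Real.rpow_nonneg (ha ℓ) m)) hr0.le
    have hgsum : Summable (fun k : ℕ => (Clin ^ m * a ℓ ^ m * r) * r ^ k) :=
      (summable_geometric_of_lt_one hr0.le hr1).mul_left _
    calc ∑' k : ℕ, ENNReal.ofReal (a (ℓ + 1 + k) ^ m)
        ≤ ∑' k : ℕ, ENNReal.ofReal ((Clin ^ m * a ℓ ^ m * r) * r ^ k) := by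
          apply ENNReal.tsum_le_tsum
          intro k
          apply ENNReal.ofReal_le_ofReal
          have h1 : a (ℓ + 1 + k) ≤ Clin * qlin ^ (1 + k) * a ℓ := by
            have := hlin ℓ (1 + k)
            have he : ℓ + (1 + k) = ℓ + 1 + k := by omega
            rwa [he] at this
          have h2 : a (ℓ + 1 + k) ^ m ≤ (Clin * qlin ^ (1 + k) * a ℓ) ^ m :=
            Real.rpow_le_rpow (ha _) h1 hm.le
          have h3 : (Clin * qlin ^ (1 + k) * a ℓ) ^ m
              = Clin ^ m * r ^ (1 + k) * a ℓ ^ m := by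
            rw [Real.mul_rpow (mul_nonneg hClin.le (pow_nonneg hq0.le _)) (ha ℓ),
              Real.mul_rpow hClin.le (pow_nonneg hq0.le _),
              pow_rpow_comm qlin hq0.le m (1 + k)]
          have h4 : Clin ^ m * r ^ (1 + k) * a ℓ ^ m
              = (Clin ^ m * a ℓ ^ m * r) * r ^ k := by
            rw [pow_add, pow_one]; ring
          calc a (ℓ + 1 + k) ^ m ≤ (Clin * qlin ^ (1 + k) * a ℓ) ^ m := h2
            _ = (Clin ^ m * a ℓ ^ m * r) * r ^ k := by rw [h3, h4]
      _ = ENNReal.ofReal (∑' k : ℕ, (Clin ^ m * a ℓ ^ m * r) * r ^ k) := by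
          rw [ENNReal.ofReal_tsum_of_nonneg
            (fun k => mul_nonneg hBnn (pow_nonneg hr0.le k)) hgsum]
      _ = ENNReal.ofReal ((Clin ^ m * r * (1 - r)⁻¹) * a ℓ ^ m) := by
          congr 1
          rw [tsum_mul_left, tsum_geometric_of_lt_one hr0.le hr1]
          ring
end

section
/- Let (a_ℓ)_{ℓ∈ℕ₀} and (t_ℓ)_{ℓ∈ℕ₀} be sequences of nonnegative real numbers such that a_{ℓ+n} ≤ C₁·q^n·a_ℓ for all ℓ, n ∈ ℕ₀, where C₁ > 0 and 0 < q < 1. Then, for every s > 0, with M(s) := sup_{ℓ∈ℕ₀} t_ℓ^s·a_ℓ, there holds M(s) ≤ sup_{ℓ∈ℕ₀} (∑_{ℓ'=0}^{ℓ} ∑_{ℓ''=0}^{ℓ'} t_{ℓ''})^s·a_ℓ ≤ C_cost(s)·M(s), where C_cost(s) > 0 is a constant depending only on C₁, q, and s (one may take C_cost(s) = (C₁^{1/s}/(1−q^{1/s}))^{2s}). -/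
private lemma geo_aux {r : ℝ} (hr0 : 0 ≤ r) (hr1 : r < 1) (n : ℕ) :
    ∑ k ∈ Finset.range n, r ^ k ≤ 1 / (1 - r) := by
  have h1 : (0:ℝ) < 1 - r := by linarith
  have h2 : (r ^ n - 1) / (r - 1) = (1 - r ^ n) / (1 - r) := by
    rw [← neg_div_neg_eq]; ring_nf
  rw [geom_sum_eq hr1.ne, h2]
  exact (div_le_div_iff_of_pos_right h1).mpr (by nlinarith [pow_nonneg hr0 n])

private lemma geo_shift {r : ℝ} (hr0 : 0 ≤ r) (hr1 : r < 1) {m ℓ : ℕ} (hm : m ≤ ℓ) :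
    ∑ k ∈ Finset.range (m + 1), r ^ (ℓ - k) ≤ r ^ (ℓ - m) / (1 - r) := by
  have h1 : (0:ℝ) < 1 - r := by linarith
  rw [← Finset.sum_range_reflect (fun k => r ^ (ℓ - k)) (m + 1)]
  have hcongr : ∀ j ∈ Finset.range (m + 1),
      r ^ (ℓ - (m + 1 - 1 - j)) = r ^ (ℓ - m) * r ^ j := by
    intro j hj
    rw [Finset.mem_range] at hj
    rw [← pow_add]
    congr 1
    omega
  rw [Finset.sum_congr rfl hcongr, ← Finset.mul_sum, div_eq_mul_one_div]
  exact mul_le_mul_of_nonneg_left (geo_aux hr0 hr1 _) (pow_nonneg hr0 _)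

/-- Rates = complexity criterion (Lemma `complexity:sequence`, first part):
under R-linear convergence of `a`, the rate with respect to `t_ℓ` coincides
with the rate with respect to the doubly-cumulative sums of `t`. -/
theorem rates_eq_complexity
    (a t : ℕ → ℝ) (ha : ∀ ℓ, 0 ≤ a ℓ) (ht : ∀ ℓ, 0 ≤ t ℓ)
    (C₁ q : ℝ) (hC₁ : 0 < C₁) (hq0 : 0 < q) (hq1 : q < 1)
    (hlin : ∀ ℓ n : ℕ, a (ℓ + n) ≤ C₁ * q ^ n * a ℓ)
    (s : ℝ) (hs : 0 < s) :
    (⨆ ℓ : ℕ, ENNReal.ofReal ((t ℓ) ^ s * a ℓ))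
      ≤ (⨆ ℓ : ℕ, ENNReal.ofReal
          ((∑ ℓ' ∈ Finset.range (ℓ + 1),
              ∑ ℓ'' ∈ Finset.range (ℓ' + 1), t ℓ'') ^ s * a ℓ))
    ∧
    (⨆ ℓ : ℕ, ENNReal.ofReal
        ((∑ ℓ' ∈ Finset.range (ℓ + 1),
            ∑ ℓ'' ∈ Finset.range (ℓ' + 1), t ℓ'') ^ s * a ℓ))
      ≤ ENNReal.ofReal ((C₁ ^ (1 / s) / (1 - q ^ (1 / s))) ^ (2 * s))
          * (⨆ ℓ : ℕ, ENNReal.ofReal ((t ℓ) ^ s * a ℓ)) := by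
  have hsne : s ≠ 0 := hs.ne'
  set S : ℕ → ℝ := fun ℓ => ∑ ℓ' ∈ Finset.range (ℓ + 1),
      ∑ ℓ'' ∈ Finset.range (ℓ' + 1), t ℓ'' with hS
  have hS0 : ∀ ℓ, 0 ≤ S ℓ := fun ℓ =>
    Finset.sum_nonneg fun _ _ => Finset.sum_nonneg fun _ _ => ht _
  set r : ℝ := q ^ (1 / s) with hrdef
  have hr0 : 0 < r := Real.rpow_pos_of_pos hq0 _
  have hr1 : r < 1 := Real.rpow_lt_one hq0.le hq1 (by positivity)
  have h1r : (0:ℝ) < 1 - r := by linarith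
  have hCcost : 0 < (C₁ ^ (1 / s) / (1 - q ^ (1 / s))) ^ (2 * s) := by
    apply Real.rpow_pos_of_pos
    exact div_pos (Real.rpow_pos_of_pos hC₁ _) h1r
  constructor
  · -- first inequality: t ℓ ≤ S ℓ
    refine iSup_mono fun ℓ => ENNReal.ofReal_le_ofReal ?_
    have h1 : t ℓ ≤ ∑ ℓ'' ∈ Finset.range (ℓ + 1), t ℓ'' :=
      Finset.single_le_sum (fun i _ => ht i) (Finset.self_mem_range_succ ℓ)
    have h2 : (∑ ℓ'' ∈ Finset.range (ℓ + 1), t ℓ'') ≤ S ℓ :=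
      Finset.single_le_sum (f := fun ℓ' => ∑ ℓ'' ∈ Finset.range (ℓ' + 1), t ℓ'')
        (fun i _ => Finset.sum_nonneg fun _ _ => ht _) (Finset.self_mem_range_succ ℓ)
    exact mul_le_mul_of_nonneg_right
      (Real.rpow_le_rpow (ht ℓ) (h1.trans h2) hs.le) (ha ℓ)
  · -- second inequality
    set M : ENNReal := ⨆ ℓ : ℕ, ENNReal.ofReal ((t ℓ) ^ s * a ℓ) with hMdef
    by_cases hM : M = ⊤
    · rw [hM, ENNReal.mul_top ((ENNReal.ofReal_pos.mpr hCcost).ne')]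
      exact le_top
    · by_cases hA : ∀ ℓ, a ℓ = 0
      · refine iSup_le fun ℓ => ?_
        simp [hA ℓ]
      · push_neg at hA
        obtain ⟨ℓ₀, hℓ₀⟩ := hA
        have haℓ₀ : 0 < a ℓ₀ := lt_of_le_of_ne (ha ℓ₀) (Ne.symm hℓ₀)
        have hC1ge : 1 ≤ C₁ := by
          have := hlin ℓ₀ 0
          simp at this
          nlinarith
        set B : ℝ := M.toReal with hB
        have hB0 : 0 ≤ B := ENNReal.toReal_nonneg
        have hBle : ∀ ℓ, t ℓ ^ s * a ℓ ≤ B := by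
          intro ℓ
          have h : ENNReal.ofReal (t ℓ ^ s * a ℓ) ≤ M :=
            le_iSup (fun ℓ : ℕ => ENNReal.ofReal ((t ℓ) ^ s * a ℓ)) ℓ
          have h2 := ENNReal.toReal_mono hM h
          rwa [ENNReal.toReal_ofReal
            (mul_nonneg (Real.rpow_nonneg (ht ℓ) s) (ha ℓ))] at h2
        have hqpow : ∀ n : ℕ, (q ^ n) ^ (1 / s) = r ^ n := by
          intro n
          rw [← Real.rpow_natCast q n, ← Real.rpow_mul hq0.le, mul_comm,
            Real.rpow_mul hq0.le, Real.rpow_natCast]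
        set D : ℝ := C₁ ^ (1 / s) * B ^ (1 / s) with hD
        have hD0 : 0 ≤ D :=
          mul_nonneg (Real.rpow_nonneg hC₁.le _) (Real.rpow_nonneg hB0 _)
        -- key pointwise estimate
        have key : ∀ ℓ ℓ'' : ℕ, ℓ'' ≤ ℓ →
            t ℓ'' * (a ℓ) ^ (1 / s) ≤ D * r ^ (ℓ - ℓ'') := by
          intro ℓ ℓ'' hle
          have hsplit : ℓ = ℓ'' + (ℓ - ℓ'') := by omega
          have h1 := hlin ℓ'' (ℓ - ℓ'')
          rw [← hsplit] at h1
          have h2 : t ℓ'' ^ s * a ℓ ≤ C₁ * q ^ (ℓ - ℓ'') * B := by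
            calc t ℓ'' ^ s * a ℓ ≤ t ℓ'' ^ s * (C₁ * q ^ (ℓ - ℓ'') * a ℓ'') :=
                  mul_le_mul_of_nonneg_left h1 (Real.rpow_nonneg (ht ℓ'') s)
              _ = C₁ * q ^ (ℓ - ℓ'') * (t ℓ'' ^ s * a ℓ'') := by ring
              _ ≤ C₁ * q ^ (ℓ - ℓ'') * B :=
                  mul_le_mul_of_nonneg_left (hBle ℓ'')
                    (mul_nonneg hC₁.le (pow_nonneg hq0.le _))
          have h3 := Real.rpow_le_rpow
            (mul_nonneg (Real.rpow_nonneg (ht ℓ'') s) (ha ℓ)) h2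
            (le_of_lt (by positivity : (0:ℝ) < 1 / s))
          calc t ℓ'' * (a ℓ) ^ (1/s) = (t ℓ'' ^ s * a ℓ) ^ (1/s) := by
                rw [Real.mul_rpow (Real.rpow_nonneg (ht ℓ'') s) (ha ℓ),
                  one_div, Real.rpow_rpow_inv (ht ℓ'') hsne]
            _ ≤ (C₁ * q ^ (ℓ - ℓ'') * B) ^ (1/s) := h3
            _ = D * r ^ (ℓ - ℓ'') := by
                rw [Real.mul_rpow
                    (mul_nonneg hC₁.le (pow_nonneg hq0.le _)) hB0,
                  Real.mul_rpow hC₁.le (pow_nonneg hq0.le _),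
                  hqpow, hD]
                ring
        refine iSup_le fun ℓ => ?_
        -- real inequality for fixed ℓ
        have hsum : S ℓ * (a ℓ) ^ (1/s) ≤ D / (1 - r) ^ 2 := by
          have step1 : ∀ ℓ' ∈ Finset.range (ℓ + 1),
              (∑ ℓ'' ∈ Finset.range (ℓ' + 1), t ℓ'') * (a ℓ) ^ (1/s)
              ≤ D / (1 - r) * r ^ (ℓ - ℓ') := by
            intro ℓ' hℓ'
            rw [Finset.mem_range] at hℓ'
            rw [Finset.sum_mul]
            calc (∑ ℓ'' ∈ Finset.range (ℓ' + 1), t ℓ'' * (a ℓ) ^ (1/s))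
                ≤ ∑ ℓ'' ∈ Finset.range (ℓ' + 1), D * r ^ (ℓ - ℓ'') := by
                  refine Finset.sum_le_sum fun i hi => ?_
                  rw [Finset.mem_range] at hi
                  exact key ℓ i (by omega)
              _ = D * ∑ ℓ'' ∈ Finset.range (ℓ' + 1), r ^ (ℓ - ℓ'') := by
                  rw [Finset.mul_sum]
              _ ≤ D * (r ^ (ℓ - ℓ') / (1 - r)) :=
                  mul_le_mul_of_nonneg_left
                    (geo_shift hr0.le hr1 (by omega)) hD0
              _ = D / (1 - r) * r ^ (ℓ - ℓ') := by ring
          have hD1 : 0 ≤ D / (1 - r) := div_nonneg hD0 h1r.le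
          calc S ℓ * (a ℓ) ^ (1/s)
              = ∑ ℓ' ∈ Finset.range (ℓ + 1),
                  (∑ ℓ'' ∈ Finset.range (ℓ' + 1), t ℓ'') * (a ℓ) ^ (1/s) := by
                rw [hS, Finset.sum_mul]
            _ ≤ ∑ ℓ' ∈ Finset.range (ℓ + 1), D / (1 - r) * r ^ (ℓ - ℓ') :=
                Finset.sum_le_sum step1
            _ = D / (1 - r) * ∑ ℓ' ∈ Finset.range (ℓ + 1), r ^ (ℓ - ℓ') := by
                rw [Finset.mul_sum]
            _ ≤ D / (1 - r) * (r ^ (ℓ - ℓ) / (1 - r)) :=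
                mul_le_mul_of_nonneg_left (geo_shift hr0.le hr1 le_rfl) hD1
            _ = D / (1 - r) ^ 2 := by
                simp only [Nat.sub_self, pow_zero]
                rw [div_mul_div_comm, mul_one, sq]
        have hreal : S ℓ ^ s * a ℓ
            ≤ (C₁ ^ (1 / s) / (1 - q ^ (1 / s))) ^ (2 * s) * B := by
          have e1 : S ℓ ^ s * a ℓ = (S ℓ * (a ℓ) ^ (1/s)) ^ s := by
            rw [Real.mul_rpow (hS0 ℓ) (Real.rpow_nonneg (ha ℓ) _),
              one_div, Real.rpow_inv_rpow (ha ℓ) hsne]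
          have e2 : (S ℓ * (a ℓ) ^ (1/s)) ^ s ≤ (D / (1 - r) ^ 2) ^ s :=
            Real.rpow_le_rpow
              (mul_nonneg (hS0 ℓ) (Real.rpow_nonneg (ha ℓ) _)) hsum hs.le
          have e3 : (D / (1 - r) ^ 2) ^ s
              = (C₁ ^ (1/s) / (1 - r) ^ 2) ^ s * B := by
            rw [show D / (1 - r) ^ 2
                = (C₁ ^ (1/s) / (1 - r) ^ 2) * B ^ (1/s) by rw [hD]; ring,
              Real.mul_rpow
                (div_nonneg (Real.rpow_nonneg hC₁.le _) (sq_nonneg _))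
                (Real.rpow_nonneg hB0 _),
              one_div, Real.rpow_inv_rpow hB0 hsne]
          have e4 : (C₁ ^ (1/s) / (1 - r) ^ 2) ^ s
              ≤ (C₁ ^ (1 / s) / (1 - q ^ (1 / s))) ^ (2 * s) := by
            rw [← hrdef, show (2:ℝ) * s = ((2:ℕ) : ℝ) * s by norm_num,
              Real.rpow_natCast_mul
                (div_nonneg (Real.rpow_nonneg hC₁.le _) h1r.le)]
            refine Real.rpow_le_rpow
              (div_nonneg (Real.rpow_nonneg hC₁.le _) (sq_nonneg _)) ?_ hs.le
            rw [div_pow]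
            refine (div_le_div_iff_of_pos_right (by positivity)).mpr ?_
            have h1 : 1 ≤ C₁ ^ (1/s) := Real.one_le_rpow hC1ge (by positivity)
            nlinarith
          calc S ℓ ^ s * a ℓ = (S ℓ * (a ℓ) ^ (1/s)) ^ s := e1
            _ ≤ (D / (1 - r) ^ 2) ^ s := e2
            _ = (C₁ ^ (1/s) / (1 - r) ^ 2) ^ s * B := e3
            _ ≤ (C₁ ^ (1 / s) / (1 - q ^ (1 / s))) ^ (2 * s) * B :=
                mul_le_mul_of_nonneg_right e4 hB0
        calc ENNReal.ofReal (S ℓ ^ s * a ℓ)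
            ≤ ENNReal.ofReal ((C₁ ^ (1 / s) / (1 - q ^ (1 / s))) ^ (2 * s) * B) :=
              ENNReal.ofReal_le_ofReal hreal
          _ = ENNReal.ofReal ((C₁ ^ (1 / s) / (1 - q ^ (1 / s))) ^ (2 * s))
                * ENNReal.ofReal B :=
              ENNReal.ofReal_mul hCcost.le
          _ = ENNReal.ofReal ((C₁ ^ (1 / s) / (1 - q ^ (1 / s))) ^ (2 * s)) * M := by
              rw [hB, ENNReal.ofReal_toReal hM]
end

section
/- Let (a_ℓ)_{ℓ∈ℕ₀} and (b_ℓ)_{ℓ∈ℕ₀} be sequences of nonnegative real numbers, 0 < q < 1, 0 < δ < 1, C₂ > 0, and ε > 0 with κ := (1+ε)·q² < 1. Suppose that a_{ℓ+1} ≤ q·a_ℓ + b_ℓ and ∑_{ℓ'=ℓ}^{ℓ+N} b_{ℓ'}² ≤ C₂·(N+1)^{1−δ}·a_ℓ² for all ℓ, N ∈ ℕ₀. Then, for all ℓ, N ∈ ℕ₀, ∑_{ℓ'=ℓ}^{ℓ+N} a_{ℓ'}² ≤ [1 + (κ + (1+ε^{−1})·C₂·N^{1−δ})/(1−κ)]·a_ℓ².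 -/
/-- Step 2 of the proof of Lemma `summability:criterion`: uniform bound on
partial sums of `a_ℓ²`. Note that for `N = 0` the term `N^(1-δ)` equals `0`. -/
theorem partial_sum_square_bound
    (a b : ℕ → ℝ) (ha : ∀ ℓ, 0 ≤ a ℓ) (hb : ∀ ℓ, 0 ≤ b ℓ)
    (q δ C₂ ε : ℝ)
    (hq0 : 0 < q) (hq1 : q < 1) (hδ0 : 0 < δ) (hδ1 : δ < 1)
    (hC₂ : 0 < C₂) (hε : 0 < ε)
    (hκ : (1 + ε) * q ^ 2 < 1)
    (h1 : ∀ ℓ : ℕ, a (ℓ + 1) ≤ q * a ℓ + b ℓ)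
    (h3 : ∀ ℓ N : ℕ,
      ∑ i ∈ Finset.range (N + 1), (b (ℓ + i)) ^ 2
        ≤ C₂ * ((N : ℝ) + 1) ^ (1 - δ) * (a ℓ) ^ 2) :
    ∀ ℓ N : ℕ,
      ∑ i ∈ Finset.range (N + 1), (a (ℓ + i)) ^ 2
        ≤ (1 + ((1 + ε) * q ^ 2 + (1 + ε⁻¹) * C₂ * (N : ℝ) ^ (1 - δ))
              / (1 - (1 + ε) * q ^ 2)) * (a ℓ) ^ 2 := by
  intro ℓ N
  set κ : ℝ := (1 + ε) * q ^ 2 with hκdef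
  have hκ0 : 0 ≤ κ := by positivity
  have h1κ : 0 < 1 - κ := by linarith
  have hεinv : ε * ε⁻¹ = 1 := mul_inv_cancel₀ hε.ne'
  have hεinv0 : 0 ≤ ε⁻¹ := inv_nonneg.2 hε.le
  -- pointwise bound via Young's inequality
  have key : ∀ m, a (m + 1) ^ 2 ≤ κ * a m ^ 2 + (1 + ε⁻¹) * b m ^ 2 := by
    intro m
    have h := h1 m
    have h2 : a (m + 1) ^ 2 ≤ (q * a m + b m) ^ 2 := by
      nlinarith [ha (m + 1), ha m, hb m, hq0.le]
    have hy : (q * a m + b m) ^ 2 ≤ κ * a m ^ 2 + (1 + ε⁻¹) * b m ^ 2 := by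
      rw [hκdef]
      nlinarith [mul_nonneg hεinv0 (sq_nonneg (ε * (q * a m) - b m)), hεinv]
    linarith
  set S : ℝ := ∑ i ∈ Finset.range (N + 1), (a (ℓ + i)) ^ 2 with hS
  set X : ℝ := (1 + ε⁻¹) * C₂ * (N : ℝ) ^ (1 - δ) with hX
  have hsplit : S = (∑ i ∈ Finset.range N, (a (ℓ + (i + 1))) ^ 2) + a ℓ ^ 2 := by
    rw [hS, Finset.sum_range_succ' (fun i => (a (ℓ + i)) ^ 2) N]
    simp
  have hsum1 : (∑ i ∈ Finset.range N, (a (ℓ + (i + 1))) ^ 2)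
      ≤ κ * (∑ i ∈ Finset.range N, (a (ℓ + i)) ^ 2)
        + (1 + ε⁻¹) * (∑ i ∈ Finset.range N, (b (ℓ + i)) ^ 2) := by
    rw [Finset.mul_sum, Finset.mul_sum, ← Finset.sum_add_distrib]
    refine Finset.sum_le_sum fun i _ => ?_
    have := key (ℓ + i)
    simpa [add_assoc] using this
  have hsub : (∑ i ∈ Finset.range N, (a (ℓ + i)) ^ 2) ≤ S := by
    rw [hS]
    exact Finset.sum_le_sum_of_subset_of_nonneg
      (Finset.range_subset_range.2 (Nat.le_succ N)) (fun i _ _ => sq_nonneg _)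
  have hbsum : (∑ i ∈ Finset.range N, (b (ℓ + i)) ^ 2)
      ≤ C₂ * (N : ℝ) ^ (1 - δ) * (a ℓ) ^ 2 := by
    cases N with
    | zero => simp [Real.zero_rpow (by linarith : (1 : ℝ) - δ ≠ 0)]
    | succ M =>
      have := h3 ℓ M
      have hc : ((M : ℝ) + 1) = ((M + 1 : ℕ) : ℝ) := by push_cast; ring
      rwa [hc] at this
  have hmain : S ≤ a ℓ ^ 2 + κ * S + X * a ℓ ^ 2 := by
    have hb' : (1 + ε⁻¹) * (∑ i ∈ Finset.range N, (b (ℓ + i)) ^ 2)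
        ≤ X * a ℓ ^ 2 := by
      rw [hX]
      calc (1 + ε⁻¹) * (∑ i ∈ Finset.range N, (b (ℓ + i)) ^ 2)
          ≤ (1 + ε⁻¹) * (C₂ * (N : ℝ) ^ (1 - δ) * (a ℓ) ^ 2) :=
            mul_le_mul_of_nonneg_left hbsum (by linarith)
        _ = (1 + ε⁻¹) * C₂ * (N : ℝ) ^ (1 - δ) * a ℓ ^ 2 := by ring
    have hκS : κ * (∑ i ∈ Finset.range N, (a (ℓ + i)) ^ 2) ≤ κ * S :=
      mul_le_mul_of_nonneg_left hsub hκ0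
    nlinarith [hsplit, hsum1]
  have hdiv : S ≤ (1 + X) / (1 - κ) * a ℓ ^ 2 := by
    rw [div_mul_eq_mul_div, le_div_iff₀ h1κ]
    nlinarith [hmain]
  calc S ≤ (1 + X) / (1 - κ) * a ℓ ^ 2 := hdiv
    _ = (1 + (κ + X) / (1 - κ)) * a ℓ ^ 2 := by
        congr 1
        field_simp
        ring
    _ = (1 + (κ + (1 + ε⁻¹) * C₂ * (N : ℝ) ^ (1 - δ)) / (1 - κ)) * a ℓ ^ 2 := by
        rw [hX]
end

section
/- Let (a_ℓ)_{ℓ∈ℕ₀} be a sequence of nonnegative real numbers, 0 < δ < 1, and C ≥ 1 such that ∑_{ℓ'=ℓ}^{ℓ+N} a_{ℓ'}² ≤ C·(N+1)^{1−δ}·a_ℓ² for all ℓ, N ∈ ℕ₀. Then (a_ℓ) is R-linearly convergent, i.e., there exist constants C_lin > 0 and 0 < q_lin < 1 (depending only on C and δ) such that a_{ℓ+n} ≤ C_lin·q_lin^n·a_ℓ for all ℓ, n ∈ ℕ₀. -/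
/-!
Write `b ℓ = a ℓ ^ 2` and fix `M` with `(M + 1) ^ δ > C`. Then the window sum
`∑_{i ≤ M} b (ℓ + i)` is at most `c * b ℓ` with `c < M + 1`, so by pigeonhole some
`b (ℓ + i)` with `1 ≤ i ≤ M` is at most `θ * b ℓ`, where `θ = (c - 1) / M < 1`.
Chaining these drops, which are at most `M` steps apart, and bounding the terms in between
by the window sum gives `b (ℓ + n) ≤ K * (θ ^ (1 / M)) ^ n * b ℓ`; square roots transfer
this to `a`.
-/

open Finset Filter

def IsRLinearlyConvergent (a : ℕ → ℝ) : Prop :=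
  ∃ Clin qlin : ℝ, 0 < Clin ∧ 0 < qlin ∧ qlin < 1 ∧ ∀ ℓ n : ℕ, a (ℓ + n) ≤ Clin * qlin ^ n * a ℓ

theorem IsRLinearlyConvergent.of_sq {a : ℕ → ℝ} (ha : ∀ ℓ, 0 ≤ a ℓ)
    (h : IsRLinearlyConvergent fun ℓ => a ℓ ^ 2) : IsRLinearlyConvergent a := by
  obtain ⟨K, q, hK, hq0, hq1, hbound⟩ := h
  refine ⟨√K, √q, by positivity, by positivity, by simpa using Real.sqrt_lt_sqrt hq0.le hq1,
    fun ℓ n => ?_⟩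
  calc a (ℓ + n) = √(a (ℓ + n) ^ 2) := (Real.sqrt_sq (ha _)).symm
    _ ≤ √(K * q ^ n * a ℓ ^ 2) := Real.sqrt_le_sqrt (hbound ℓ n)
    _ = √K * √q ^ n * a ℓ := by
      rw [Real.sqrt_mul (by positivity), Real.sqrt_mul hK.le, Real.sqrt_sq (ha ℓ),
        (Real.sqrt_eq_iff_eq_sq (x := q ^ n) (y := √q ^ n) (by positivity) (by positivity)).2
          (by rw [← pow_mul, mul_comm, pow_mul, Real.sq_sqrt hq0.le])]

section

variable {b : ℕ → ℝ} (hb : ∀ ℓ, 0 ≤ b ℓ)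
include hb

theorem le_div_pow_mul_pow_mul_of_forall_exists_le {M : ℕ} {K q : ℝ} (hK : 0 ≤ K) (hq0 : 0 < q)
    (hq1 : q ≤ 1) (hwindow : ∀ ℓ n, n < M → b (ℓ + n) ≤ K * b ℓ)
    (hdrop : ∀ ℓ, ∃ i, 0 < i ∧ i ≤ M ∧ b (ℓ + i) ≤ q ^ M * b ℓ) (ℓ n : ℕ) :
    b (ℓ + n) ≤ K / q ^ M * q ^ n * b ℓ := by
  induction n using Nat.strong_induction_on generalizing ℓ with
  | _ n ih =>
    obtain ⟨i, hi0, hiM, hi⟩ := hdrop ℓ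
    rcases le_or_gt i n with hin | hni
    · calc b (ℓ + n) = b (ℓ + i + (n - i)) := by rw [add_assoc, Nat.add_sub_cancel' hin]
        _ ≤ K / q ^ M * q ^ (n - i) * b (ℓ + i) := ih (n - i) (by omega) _
        _ ≤ K / q ^ M * q ^ (n - i) * (q ^ i * b ℓ) := by
          gcongr
          exact hi.trans (mul_le_mul_of_nonneg_right (pow_le_pow_of_le_one hq0.le hq1 hiM) (hb ℓ))
        _ = K / q ^ M * q ^ n * b ℓ := by
          rw [mul_assoc, ← mul_assoc (q ^ (n - i)), ← pow_add, Nat.sub_add_cancel hin, mul_assoc]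
    · calc b (ℓ + n) ≤ K * b ℓ := hwindow ℓ n (by omega)
        _ ≤ K / q ^ M * q ^ n * b ℓ := by
          gcongr
          · exact hb ℓ
          rw [div_mul_eq_mul_div, le_div_iff₀ (by positivity)]
          exact mul_le_mul_of_nonneg_left (pow_le_pow_of_le_one hq0.le hq1 (by omega)) hK

theorem IsRLinearlyConvergent.of_sum_range_le {M : ℕ} (hM : 0 < M) {c : ℝ} (hc : c < M + 1)
    (h : ∀ ℓ, ∑ i ∈ range (M + 1), b (ℓ + i) ≤ c * b ℓ) : IsRLinearlyConvergent b := by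
  -- the `max` keeps `θ` positive, so that it has an `M`-th root `q`
  set θ := max ((c - 1) / M) (1 / 2)
  have hθ1 : θ < 1 := max_lt ((div_lt_one (by positivity)).2 (by linarith)) (by norm_num)
  set q := θ ^ ((M : ℝ)⁻¹)
  have hqM : q ^ M = θ := Real.rpow_inv_natCast_pow (by positivity) hM.ne'
  have hq0 : 0 < q := by positivity
  have hq1 : q < 1 := Real.rpow_lt_one (by positivity) hθ1 (by positivity)
  have hwindow : ∀ ℓ n, n < M → b (ℓ + n) ≤ max c 1 * b ℓ := fun ℓ n hn =>
    calc b (ℓ + n) ≤ ∑ i ∈ range (M + 1), b (ℓ + i) :=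
          single_le_sum (fun i _ => hb _) (mem_range.2 (by omega))
      _ ≤ c * b ℓ := h ℓ
      _ ≤ max c 1 * b ℓ := by gcongr; exacts [hb ℓ, le_max_left c 1]
  have hdrop : ∀ ℓ, ∃ i, 0 < i ∧ i ≤ M ∧ b (ℓ + i) ≤ q ^ M * b ℓ := by
    intro ℓ
    -- pigeonhole on the last `M` terms of the window, whose sum is at most `(c - 1) * b ℓ`
    have hsum : ∑ j ∈ range M, b (ℓ + (j + 1)) ≤ ∑ j ∈ range M, (c - 1) / M * b ℓ := by
      have := h ℓ
      rw [sum_range_succ', add_zero] at this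
      rw [sum_const, card_range, nsmul_eq_mul, ← mul_assoc, mul_div_cancel₀ _ (by positivity)]
      linarith
    obtain ⟨j, hj, hle⟩ := exists_le_of_sum_le (nonempty_range_iff.2 hM.ne') hsum
    refine ⟨j + 1, j.succ_pos, mem_range.1 hj, hle.trans ?_⟩
    rw [hqM]
    gcongr
    exacts [hb ℓ, le_max_left _ _]
  exact ⟨max c 1 / q ^ M, q, by positivity, hq0, hq1,
    le_div_pow_mul_pow_mul_of_forall_exists_le hb (by positivity) hq0 hq1.le hwindow hdrop⟩

end

theorem square_summability_implies_Rlinear_general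
    (a : ℕ → ℝ) (ha : ∀ ℓ, 0 ≤ a ℓ)
    (δ C : ℝ) (hδ0 : 0 < δ)
    (h : ∀ ℓ N : ℕ,
      ∑ i ∈ Finset.range (N + 1), (a (ℓ + i)) ^ 2
        ≤ C * ((N : ℝ) + 1) ^ (1 - δ) * (a ℓ) ^ 2) :
    ∃ Clin qlin : ℝ, 0 < Clin ∧ 0 < qlin ∧ qlin < 1 ∧
      ∀ ℓ n : ℕ, a (ℓ + n) ≤ Clin * qlin ^ n * a ℓ := by
  have hgrow : Tendsto (fun M : ℕ => ((M : ℝ) + 1) ^ δ) atTop atTop :=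
    (tendsto_rpow_atTop hδ0).comp (tendsto_atTop_add_const_right _ 1 tendsto_natCast_atTop_atTop)
  obtain ⟨M, hM, hCM⟩ := ((eventually_gt_atTop 0).and (hgrow.eventually_gt_atTop C)).exists
  have hM1 : (0 : ℝ) < M + 1 := by positivity
  have hc : C * ((M : ℝ) + 1) ^ (1 - δ) < M + 1 := by
    rw [Real.rpow_sub hM1, Real.rpow_one, ← mul_div_assoc, div_lt_iff₀ (by positivity)]
    nlinarith
  exact IsRLinearlyConvergent.of_sq ha
    (IsRLinearlyConvergent.of_sum_range_le (fun ℓ => sq_nonneg _) hM hc (h · M))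

/-- Uniform summability of squares with subalgebraic growth implies R-linear
convergence (implicit in the proof of Lemma `summability:criterion`). -/
theorem square_summability_implies_Rlinear
    (a : ℕ → ℝ) (ha : ∀ ℓ, 0 ≤ a ℓ)
    (δ C : ℝ) (hδ0 : 0 < δ) (hδ1 : δ < 1) (hC : 1 ≤ C)
    (h : ∀ ℓ N : ℕ,
      ∑ i ∈ Finset.range (N + 1), (a (ℓ + i)) ^ 2
        ≤ C * ((N : ℝ) + 1) ^ (1 - δ) * (a ℓ) ^ 2) :
    ∃ Clin qlin : ℝ, 0 < Clin ∧ 0 < qlin ∧ qlin < 1 ∧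
      ∀ ℓ n : ℕ, a (ℓ + n) ≤ Clin * qlin ^ n * a ℓ :=
  square_summability_implies_Rlinear_general a ha δ C hδ0 h
end

section
/- Let X be a real Hilbert space with inner product ⟨·,·⟩ and induced norm ‖·‖, and let Y ⊆ X be a subspace. Let A : X → X satisfy ⟨A u − A v, u − v⟩ ≥ α·‖u − v‖² and ‖A u − A v‖ ≤ L·‖u − v‖ for all u, v ∈ X, where 0 < α ≤ L. Let f ∈ X and let E : X → ℝ be an energy functional whose directional derivative satisfies: for all v, w ∈ X, the function t ↦ E(v + t·w) is differentiable at every t ∈ ℝ with derivative ⟨A(v + t·w) − f, w⟩. Let u_H ∈ Y be a Galerkin solution, i.e., ⟨A u_H − f, v⟩ = 0 for all v ∈ Y. Then, for all v ∈ Y, there holds (α/2)·‖u_H − v‖² ≤ E(v) − E(u_H) ≤ (L/2)·‖u_H − v‖². -/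
open scoped RealInnerProductSpace

/-- Energy equivalence for strongly monotone, Lipschitz continuous operators:
the energy difference to the Galerkin solution is equivalent to the squared
distance. -/
theorem energy_equivalence
    {X : Type*} [NormedAddCommGroup X] [InnerProductSpace ℝ X]
    (Y : Submodule ℝ X)
    (A : X → X) (α L : ℝ) (hα : 0 < α) (hαL : α ≤ L)
    (hmono : ∀ u v : X, α * ‖u - v‖ ^ 2 ≤ ⟪A u - A v, u - v⟫)
    (hlip : ∀ u v : X, ‖A u - A v‖ ≤ L * ‖u - v‖)
    (f : X) (E : X → ℝ)
    (hE : ∀ v w : X, ∀ t : ℝ,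
      HasDerivAt (fun s : ℝ => E (v + s • w)) ⟪A (v + t • w) - f, w⟫ t)
    (uH : X) (huH : uH ∈ Y)
    (hGalerkin : ∀ v ∈ Y, ⟪A uH - f, v⟫ = 0) :
    ∀ v ∈ Y,
      α / 2 * ‖uH - v‖ ^ 2 ≤ E v - E uH ∧
      E v - E uH ≤ L / 2 * ‖uH - v‖ ^ 2 := by
  intro v hv
  set w := v - uH with hw
  have hwY : w ∈ Y := Y.sub_mem hv huH
  have hG : ⟪A uH - f, w⟫ = 0 := hGalerkin w hwY
  have hnorm : ‖uH - v‖ = ‖w‖ := by rw [hw, norm_sub_rev]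
  have hL0 : 0 ≤ L := le_trans hα.le hαL
  have hAcont : Continuous A := by
    have : LipschitzWith (Real.toNNReal L) A := by
      apply LipschitzWith.of_dist_le_mul
      intro x y
      rw [dist_eq_norm, dist_eq_norm, Real.coe_toNNReal L hL0]
      exact hlip x y
    exact this.continuous
  have hφcont : Continuous fun t : ℝ => ⟪A (uH + t • w) - f, w⟫ := by
    apply Continuous.inner
    · exact ((hAcont.comp (by continuity)).sub continuous_const)
    · exact continuous_const
  have hFTC : (∫ t in (0:ℝ)..1, ⟪A (uH + t • w) - f, w⟫) = E v - E uH := by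
    have h := intervalIntegral.integral_eq_sub_of_hasDerivAt
      (f := fun s : ℝ => E (uH + s • w))
      (fun t _ => hE uH w t) (hφcont.intervalIntegrable 0 1)
    have h1 : uH + (1:ℝ) • w = v := by
      rw [one_smul, hw]; abel
    have h0 : uH + (0:ℝ) • w = uH := by simp
    rw [h]
    show E (uH + (1:ℝ) • w) - E (uH + (0:ℝ) • w) = E v - E uH
    rw [h1, h0]
  have key : ∀ t : ℝ, ⟪A (uH + t • w) - f, w⟫ = ⟪A (uH + t • w) - A uH, w⟫ := by
    intro t
    have hsplit : A (uH + t • w) - f = (A (uH + t • w) - A uH) + (A uH - f) := by abel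
    rw [hsplit, inner_add_left, hG, add_zero]
  have hlow : ∀ t ∈ Set.Icc (0:ℝ) 1,
      α * t * ‖w‖ ^ 2 ≤ ⟪A (uH + t • w) - f, w⟫ := by
    intro t ht
    rw [key t]
    rcases eq_or_lt_of_le ht.1 with h0 | htpos
    · simp [← h0]
    · have hm := hmono (uH + t • w) uH
      have hsub : uH + t • w - uH = t • w := by abel
      rw [hsub, norm_smul, real_inner_smul_right] at hm
      have hnt : ‖t‖ = t := by rw [Real.norm_eq_abs, abs_of_pos htpos]
      rw [hnt] at hm
      have : t * (α * t * ‖w‖ ^ 2) ≤ t * ⟪A (uH + t • w) - A uH, w⟫ := by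
        nlinarith [hm]
      exact le_of_mul_le_mul_left this htpos
  have hhigh : ∀ t ∈ Set.Icc (0:ℝ) 1,
      ⟪A (uH + t • w) - f, w⟫ ≤ L * t * ‖w‖ ^ 2 := by
    intro t ht
    rw [key t]
    have h1 : ⟪A (uH + t • w) - A uH, w⟫ ≤ ‖A (uH + t • w) - A uH‖ * ‖w‖ :=
      real_inner_le_norm _ _
    have h2 : ‖A (uH + t • w) - A uH‖ ≤ L * (t * ‖w‖) := by
      have := hlip (uH + t • w) uH
      have hsub : uH + t • w - uH = t • w := by abel
      rw [hsub, norm_smul, Real.norm_eq_abs, abs_of_nonneg ht.1] at this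
      exact this
    calc ⟪A (uH + t • w) - A uH, w⟫ ≤ ‖A (uH + t • w) - A uH‖ * ‖w‖ := h1
      _ ≤ L * (t * ‖w‖) * ‖w‖ := by
          apply mul_le_mul_of_nonneg_right h2 (norm_nonneg _)
      _ = L * t * ‖w‖ ^ 2 := by ring
  have hilow : (∫ t in (0:ℝ)..1, α * t * ‖w‖ ^ 2) = α / 2 * ‖w‖ ^ 2 := by
    have : (fun t : ℝ => α * t * ‖w‖ ^ 2) = fun t : ℝ => (α * ‖w‖ ^ 2) * t := by
      ext t; ring
    rw [this, intervalIntegral.integral_const_mul, integral_id]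
    ring
  have hihigh : (∫ t in (0:ℝ)..1, L * t * ‖w‖ ^ 2) = L / 2 * ‖w‖ ^ 2 := by
    have : (fun t : ℝ => L * t * ‖w‖ ^ 2) = fun t : ℝ => (L * ‖w‖ ^ 2) * t := by
      ext t; ring
    rw [this, intervalIntegral.integral_const_mul, integral_id]
    ring
  have hint1 : IntervalIntegrable (fun t : ℝ => α * t * ‖w‖ ^ 2) MeasureTheory.volume 0 1 := by
    exact ((continuous_const.mul continuous_id).mul continuous_const).intervalIntegrable 0 1
  have hint2 : IntervalIntegrable (fun t : ℝ => L * t * ‖w‖ ^ 2) MeasureTheory.volume 0 1 := by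
    exact ((continuous_const.mul continuous_id).mul continuous_const).intervalIntegrable 0 1
  have hintφ := hφcont.intervalIntegrable (μ := MeasureTheory.volume) 0 1
  constructor
  · rw [hnorm, ← hFTC, ← hilow]
    exact intervalIntegral.integral_mono_on (by norm_num) hint1 hintφ hlow
  · rw [hnorm, ← hFTC, ← hihigh]
    exact intervalIntegral.integral_mono_on (by norm_num) hintφ hint2 hhigh
end

section
/- Let X be a real Hilbert space with inner product ⟨·,·⟩ and induced norm ‖·‖, and let (X_ℓ)_{ℓ∈ℕ₀} be subspaces of X with X_ℓ ⊆ X_{ℓ+1} for all ℓ ∈ ℕ₀. Let A : X → X satisfy ⟨A u − A v, u − v⟩ ≥ α·‖u − v‖² and ‖A u − A v‖ ≤ L·‖u − v‖ for all u, v ∈ X, where 0 < α ≤ L. Let f ∈ X, let E : X → ℝ satisfy that for all v, w ∈ X the function t ↦ E(v + t·w) is differentiable at every t ∈ ℝ with derivative ⟨A(v + t·w) − f, w⟩, let u⋆ ∈ X satisfy ⟨A u⋆ − f, v⟩ = 0 for all v ∈ X, and for each ℓ let u_ℓ⋆ ∈ X_ℓ satisfy ⟨A u_ℓ⋆ − f,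 v⟩ = 0 for all v ∈ X_ℓ. Then, for all ℓ ∈ ℕ₀, there holds ∑_{ℓ'=ℓ}^{∞} ‖u_{ℓ'+1}⋆ − u_{ℓ'}⋆‖² ≤ (L/α)·‖u⋆ − u_ℓ⋆‖², i.e., quasi-orthogonality holds with constant C_orth = L/α and exponent δ = 1. -/
/-!
Along the segment from a point `u` with `⟪A u - f, v - u⟫ = 0` to `v`, the derivative of the
energy `t ↦ E (u + t • (v - u))` lies between `α t ‖v - u‖²` and `L t ‖v - u‖²`, so
`α/2 ‖v - u‖² ≤ E v - E u ≤ L/2 ‖v - u‖²`. Since `u_k ∈ X_{k+1}`, the Galerkin energies decrease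
by at least `α/2 ‖u_{k+1} - u_k‖²` per level and are bounded below by `E u⋆`; telescoping gives
`α/2 ∑_{k ≥ ℓ} ‖u_{k+1} - u_k‖² ≤ E u_ℓ - E u⋆ ≤ L/2 ‖u⋆ - u_ℓ‖²`.
-/

open scoped RealInnerProductSpace

open Finset

theorem add_half_le_of_mul_le_deriv {φ φ' : ℝ → ℝ} {c : ℝ}
    (hφ : ∀ t, HasDerivAt φ (φ' t) t) (hc : ∀ t ∈ Set.Ioo (0 : ℝ) 1, c * t ≤ φ' t) :
    φ 0 + c / 2 ≤ φ 1 := by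
  have hψ : ∀ t, HasDerivAt (fun s => φ s - c / 2 * s ^ 2) (φ' t - c * t) t := fun t =>
    ((hφ t).sub ((hasDerivAt_pow 2 t).const_mul (c / 2))).congr_deriv (by push_cast; ring)
  have hmono : MonotoneOn (fun s => φ s - c / 2 * s ^ 2) (Set.Icc 0 1) := by
    refine monotoneOn_of_deriv_nonneg (convex_Icc 0 1)
      (fun t _ => (hψ t).continuousAt.continuousWithinAt)
      (fun t _ => (hψ t).differentiableAt.differentiableWithinAt) fun t ht => ?_
    rw [interior_Icc] at ht
    rw [(hψ t).deriv, sub_nonneg]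
    exact hc t ht
  have := hmono (Set.left_mem_Icc.2 zero_le_one) (Set.right_mem_Icc.2 zero_le_one) zero_le_one
  linarith

theorem le_add_half_of_deriv_le_mul {φ φ' : ℝ → ℝ} {c : ℝ}
    (hφ : ∀ t, HasDerivAt φ (φ' t) t) (hc : ∀ t ∈ Set.Ioo (0 : ℝ) 1, φ' t ≤ c * t) :
    φ 1 ≤ φ 0 + c / 2 := by
  have := add_half_le_of_mul_le_deriv (φ := -φ) (c := -c) (fun t => (hφ t).neg)
    fun t ht => by simpa [neg_mul] using hc t ht
  simp only [Pi.neg_apply] at this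
  linarith

section StronglyMonotone

variable {X : Type*} [NormedAddCommGroup X] [InnerProductSpace ℝ X] {A : X → X}

theorem mul_sq_norm_le_inner_sub_smul {α : ℝ} (hmono : ∀ u v, α * ‖u - v‖ ^ 2 ≤ ⟪A u - A v, u - v⟫)
    (u w : X) {t : ℝ} (ht : 0 < t) : α * t * ‖w‖ ^ 2 ≤ ⟪A (u + t • w) - A u, w⟫ := by
  have h := hmono (u + t • w) u
  rw [add_sub_cancel_left, real_inner_smul_right, norm_smul, Real.norm_of_nonneg ht.le] at h
  have : t * (α * t * ‖w‖ ^ 2) ≤ t * ⟪A (u + t • w) - A u, w⟫ := by linarith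
  exact le_of_mul_le_mul_left this ht

theorem inner_sub_smul_le_mul_sq_norm {L : ℝ} (hlip : ∀ u v, ‖A u - A v‖ ≤ L * ‖u - v‖)
    (u w : X) {t : ℝ} (ht : 0 ≤ t) : ⟪A (u + t • w) - A u, w⟫ ≤ L * t * ‖w‖ ^ 2 := by
  have h := hlip (u + t • w) u
  rw [add_sub_cancel_left, norm_smul, Real.norm_of_nonneg ht] at h
  calc ⟪A (u + t • w) - A u, w⟫ ≤ ‖A (u + t • w) - A u‖ * ‖w‖ := real_inner_le_norm _ _
    _ ≤ L * (t * ‖w‖) * ‖w‖ := by gcongr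
    _ = L * t * ‖w‖ ^ 2 := by ring

variable {f : X} {E : X → ℝ}

theorem hasDerivAt_energy_segment
    (hE : ∀ v w : X, ∀ t : ℝ,
      HasDerivAt (fun s : ℝ => E (v + s • w)) ⟪A (v + t • w) - f, w⟫ t)
    {u v : X} (horth : ⟪A u - f, v - u⟫ = 0) (t : ℝ) :
    HasDerivAt (fun s : ℝ => E (u + s • (v - u))) ⟪A (u + t • (v - u)) - A u, v - u⟫ t := by
  convert hE u (v - u) t using 1
  rw [← sub_add_sub_cancel _ (A u) f, inner_add_left, horth, add_zero]

theorem half_mul_sq_norm_le_energy_sub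
    (hE : ∀ v w : X, ∀ t : ℝ,
      HasDerivAt (fun s : ℝ => E (v + s • w)) ⟪A (v + t • w) - f, w⟫ t)
    {α : ℝ}
    (hmono : ∀ u v, α * ‖u - v‖ ^ 2 ≤ ⟪A u - A v, u - v⟫) {u v : X}
    (horth : ⟪A u - f, v - u⟫ = 0) : α / 2 * ‖v - u‖ ^ 2 ≤ E v - E u := by
  have := add_half_le_of_mul_le_deriv (c := α * ‖v - u‖ ^ 2)
    (hasDerivAt_energy_segment hE horth) fun t ht => by
      linarith [mul_sq_norm_le_inner_sub_smul hmono u (v - u) ht.1]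
  simp only [zero_smul, add_zero, one_smul, add_sub_cancel] at this
  linarith

theorem energy_sub_le_half_mul_sq_norm
    (hE : ∀ v w : X, ∀ t : ℝ,
      HasDerivAt (fun s : ℝ => E (v + s • w)) ⟪A (v + t • w) - f, w⟫ t)
    {L : ℝ}
    (hlip : ∀ u v, ‖A u - A v‖ ≤ L * ‖u - v‖) {u v : X}
    (horth : ⟪A u - f, v - u⟫ = 0) : E v - E u ≤ L / 2 * ‖v - u‖ ^ 2 := by
  have := le_add_half_of_deriv_le_mul (c := L * ‖v - u‖ ^ 2)
    (hasDerivAt_energy_segment hE horth) fun t ht => by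
      linarith [inner_sub_smul_le_mul_sq_norm hlip u (v - u) ht.1.le]
  simp only [zero_smul, add_zero, one_smul, add_sub_cancel] at this
  linarith

end StronglyMonotone

theorem mul_sum_range_le_of_le_sub_succ {a e : ℕ → ℝ} {c : ℝ}
    (h : ∀ k, c * a k ≤ e k - e (k + 1)) (N : ℕ) : c * ∑ k ∈ range N, a k ≤ e 0 - e N := by
  rw [mul_sum, ← sum_range_sub' e N]
  exact sum_le_sum fun k _ => h k

theorem quasi_orthogonality_monotone_general
    {X : Type*} [NormedAddCommGroup X] [InnerProductSpace ℝ X]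
    (Xl : ℕ → Submodule ℝ X) (hnested : ∀ ℓ, Xl ℓ ≤ Xl (ℓ + 1))
    (A : X → X) (α L : ℝ) (hα : 0 < α)
    (hmono : ∀ u v : X, α * ‖u - v‖ ^ 2 ≤ ⟪A u - A v, u - v⟫)
    (hlip : ∀ u v : X, ‖A u - A v‖ ≤ L * ‖u - v‖)
    (f : X) (E : X → ℝ)
    (hE : ∀ v w : X, ∀ t : ℝ,
      HasDerivAt (fun s : ℝ => E (v + s • w)) ⟪A (v + t • w) - f, w⟫ t)
    (ustar : X) (hustar : ∀ v : X, ⟪A ustar - f, v⟫ = 0)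
    (ul : ℕ → X) (hul : ∀ ℓ, ul ℓ ∈ Xl ℓ)
    (hGalerkin : ∀ ℓ, ∀ v ∈ Xl ℓ, ⟪A (ul ℓ) - f, v⟫ = 0) :
    ∀ ℓ : ℕ,
      (∑' k : ℕ, ENNReal.ofReal (‖ul (ℓ + k + 1) - ul (ℓ + k)‖ ^ 2))
        ≤ ENNReal.ofReal (L / α * ‖ustar - ul ℓ‖ ^ 2) := by
  intro ℓ
  have hdecrease (k : ℕ) : α / 2 * ‖ul (ℓ + k + 1) - ul (ℓ + k)‖ ^ 2
      ≤ E (ul (ℓ + k)) - E (ul (ℓ + k + 1)) := by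
    rw [norm_sub_rev]
    exact half_mul_sq_norm_le_energy_sub hE hmono <| hGalerkin _ _ <|
      (Xl _).sub_mem (hnested _ (hul _)) (hul _)
  have hmin (v : X) : E ustar ≤ E v := by
    nlinarith [half_mul_sq_norm_le_energy_sub hE hmono (hustar (v - ustar))]
  have hinitial : E (ul ℓ) - E ustar ≤ L / 2 * ‖ustar - ul ℓ‖ ^ 2 := by
    rw [norm_sub_rev]
    exact energy_sub_le_half_mul_sq_norm hE hlip (hustar _)
  refine ENNReal.tsum_le_of_sum_range_le fun N => ?_
  rw [← ENNReal.ofReal_sum_of_nonneg fun _ _ => sq_nonneg _]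
  refine ENNReal.ofReal_le_ofReal ?_
  have htel := mul_sum_range_le_of_le_sub_succ (e := fun k => E (ul (ℓ + k))) hdecrease N
  rw [add_zero] at htel
  rw [div_mul_eq_mul_div, le_div_iff₀ hα]
  nlinarith [hmin (ul (ℓ + N))]

/-- Quasi-orthogonality with constant `L/α` and exponent `δ = 1` for Galerkin
solutions of a strongly monotone, Lipschitz continuous operator equation on
nested subspaces. -/
theorem quasi_orthogonality_monotone
    {X : Type*} [NormedAddCommGroup X] [InnerProductSpace ℝ X]
    (Xl : ℕ → Submodule ℝ X) (hnested : ∀ ℓ, Xl ℓ ≤ Xl (ℓ + 1))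
    (A : X → X) (α L : ℝ) (hα : 0 < α) (hαL : α ≤ L)
    (hmono : ∀ u v : X, α * ‖u - v‖ ^ 2 ≤ ⟪A u - A v, u - v⟫)
    (hlip : ∀ u v : X, ‖A u - A v‖ ≤ L * ‖u - v‖)
    (f : X) (E : X → ℝ)
    (hE : ∀ v w : X, ∀ t : ℝ,
      HasDerivAt (fun s : ℝ => E (v + s • w)) ⟪A (v + t • w) - f, w⟫ t)
    (ustar : X) (hustar : ∀ v : X, ⟪A ustar - f, v⟫ = 0)
    (ul : ℕ → X) (hul : ∀ ℓ, ul ℓ ∈ Xl ℓ)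
    (hGalerkin : ∀ ℓ, ∀ v ∈ Xl ℓ, ⟪A (ul ℓ) - f, v⟫ = 0) :
    ∀ ℓ : ℕ,
      (∑' k : ℕ, ENNReal.ofReal (‖ul (ℓ + k + 1) - ul (ℓ + k)‖ ^ 2))
        ≤ ENNReal.ofReal (L / α * ‖ustar - ul ℓ‖ ^ 2) :=
  quasi_orthogonality_monotone_general Xl hnested A α L hα hmono hlip f E hE ustar hustar ul hul
    hGalerkin
end

section
/- Let X be a real normed vector space, let u⋆, u_prev, u♯, u, u' ∈ X, and let η ≥ 0 be a real number. Let 0 < q⋆ < 1, 0 < q_alg < 1, λ_alg > 0, λ_sym > 0, and set ρ := (2·q_alg/(1−q_alg))·λ_alg. Assume ρ < 1 and q_sym := (q⋆ + ρ)/(1 − ρ) < 1. Suppose: (i) ‖u⋆ − u♯‖ ≤ q⋆·‖u⋆ − u_prev‖ (contraction of the exact Zarantonello step); (ii) ‖u♯ − u‖ ≤ q_alg·‖u♯ − u'‖ (contraction of the algebraic solver step from u' to u); (iii) ‖u − u'‖ ≤ λ_alg·(λ_sym·η + ‖u − u_prev‖) (algebraic stopping criterion); and (iv) λ_sym·η ≤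 ‖u − u_prev‖ (failure of the symmetrization stopping criterion). Then ‖u⋆ − u‖ ≤ q_sym·‖u⋆ − u_prev‖. -/
/-- Contraction of the inexact Zarantonello iteration in the non-final case
(Lemma `inexact_contraction`, estimate (eq1)). -/
theorem inexact_zarantonello_contraction
    {X : Type*} [NormedAddCommGroup X] [NormedSpace ℝ X]
    (ustar uprev usharp u u' : X) (η : ℝ) (hη : 0 ≤ η)
    (qstar qalg lamalg lamsym : ℝ)
    (hqstar0 : 0 < qstar) (hqstar1 : qstar < 1)
    (hqalg0 : 0 < qalg) (hqalg1 : qalg < 1)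
    (hlamalg : 0 < lamalg) (hlamsym : 0 < lamsym)
    (hρ : 2 * qalg / (1 - qalg) * lamalg < 1)
    (hqsym : (qstar + 2 * qalg / (1 - qalg) * lamalg)
        / (1 - 2 * qalg / (1 - qalg) * lamalg) < 1)
    (h1 : ‖ustar - usharp‖ ≤ qstar * ‖ustar - uprev‖)
    (h2 : ‖usharp - u‖ ≤ qalg * ‖usharp - u'‖)
    (h3 : ‖u - u'‖ ≤ lamalg * (lamsym * η + ‖u - uprev‖))
    (h4 : lamsym * η ≤ ‖u - uprev‖) :
    ‖ustar - u‖ ≤ (qstar + 2 * qalg / (1 - qalg) * lamalg)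
        / (1 - 2 * qalg / (1 - qalg) * lamalg) * ‖ustar - uprev‖ := by
  set ρ := 2 * qalg / (1 - qalg) * lamalg with hρdef
  have h1q : 0 < 1 - qalg := by linarith
  have hρ0 : 0 < ρ := by
    have : 0 < 2 * qalg / (1 - qalg) := by positivity
    exact mul_pos this hlamalg
  have hρ1 : 0 < 1 - ρ := by linarith
  -- triangle inequalities
  have t1 : ‖usharp - u'‖ ≤ ‖usharp - u‖ + ‖u - u'‖ :=
    norm_sub_le_norm_sub_add_norm_sub _ _ _
  have t2 : ‖ustar - u‖ ≤ ‖ustar - usharp‖ + ‖usharp - u‖ :=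
    norm_sub_le_norm_sub_add_norm_sub _ _ _
  have t3 : ‖u - uprev‖ ≤ ‖u - ustar‖ + ‖ustar - uprev‖ :=
    norm_sub_le_norm_sub_add_norm_sub _ _ _
  have hrev : ‖u - ustar‖ = ‖ustar - u‖ := norm_sub_rev _ _
  have hsharp : (1 - qalg) * ‖usharp - u‖ ≤ qalg * ‖u - u'‖ := by nlinarith
  have hkey : ρ * (1 - qalg) = 2 * qalg * lamalg := by
    rw [hρdef]; field_simp
  have hstep : ‖usharp - u‖ ≤ ρ * ‖u - uprev‖ := by
    have h5 : (1 - qalg) * ‖usharp - u‖ ≤ (1 - qalg) * (ρ * ‖u - uprev‖) := by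
      have hkey2 : ρ * (1 - qalg) * ‖u - uprev‖ = 2 * qalg * lamalg * ‖u - uprev‖ := by
        rw [hkey]
      nlinarith [hkey2, mul_le_mul_of_nonneg_left h3 hqalg0.le,
        mul_le_mul_of_nonneg_left h4 (by positivity : (0:ℝ) ≤ qalg * lamalg)]
    exact le_of_mul_le_mul_left h5 h1q
  rw [div_mul_eq_mul_div, le_div_iff₀ hρ1]
  nlinarith [norm_nonneg (ustar - u), norm_nonneg (ustar - uprev)]
end

section
/- Let X be a real normed vector space, let u⋆, u_prev, u♯, u, u' ∈ X, and let η ≥ 0 be a real number. Let 0 < q⋆ < 1, 0 < q_alg < 1, λ_alg > 0, λ_sym > 0. Suppose: (i) ‖u⋆ − u♯‖ ≤ q⋆·‖u⋆ − u_prev‖ (contraction of the exact Zarantonello step); (ii) ‖u♯ − u‖ ≤ q_alg·‖u♯ − u'‖ (contraction of the algebraic solver step from u' to u); (iii) ‖u − u'‖ ≤ λ_alg·(λ_sym·η + ‖u − u_prev‖) (algebraic stopping criterion); and (iv) ‖u − u_prev‖ ≤ λ_sym·η (symmetrization stopping criterion satisfied). Then ‖u⋆ − u‖ ≤ q⋆·‖u⋆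 − u_prev‖ + (2·q_alg/(1−q_alg))·λ_alg·λ_sym·η. -/
/-- Perturbed contraction of the inexact Zarantonello iteration in the final
case (Lemma `inexact_contraction`, estimate (eq2)). -/
theorem inexact_zarantonello_perturbed_contraction
    {X : Type*} [NormedAddCommGroup X] [NormedSpace ℝ X]
    (ustar uprev usharp u u' : X) (η : ℝ) (hη : 0 ≤ η)
    (qstar qalg lamalg lamsym : ℝ)
    (hqstar0 : 0 < qstar) (hqstar1 : qstar < 1)
    (hqalg0 : 0 < qalg) (hqalg1 : qalg < 1)
    (hlamalg : 0 < lamalg) (hlamsym : 0 < lamsym)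
    (h1 : ‖ustar - usharp‖ ≤ qstar * ‖ustar - uprev‖)
    (h2 : ‖usharp - u‖ ≤ qalg * ‖usharp - u'‖)
    (h3 : ‖u - u'‖ ≤ lamalg * (lamsym * η + ‖u - uprev‖))
    (h4 : ‖u - uprev‖ ≤ lamsym * η) :
    ‖ustar - u‖ ≤ qstar * ‖ustar - uprev‖
        + 2 * qalg / (1 - qalg) * lamalg * lamsym * η := by
  have ht1 : ‖usharp - u'‖ ≤ ‖usharp - u‖ + ‖u - u'‖ := norm_sub_le_norm_sub_add_norm_sub _ _ _
  have ht2 : ‖ustar - u‖ ≤ ‖ustar - usharp‖ + ‖usharp - u‖ := norm_sub_le_norm_sub_add_norm_sub _ _ _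
  have hq : 0 < 1 - qalg := by linarith
  have key : ‖usharp - u‖ ≤ qalg / (1 - qalg) * ‖u - u'‖ := by
    rw [div_mul_eq_mul_div, le_div_iff₀ hq]
    nlinarith [norm_nonneg (usharp - u'), norm_nonneg (usharp - u), norm_nonneg (u - u')]
  have h5 : ‖u - u'‖ ≤ lamalg * (2 * lamsym * η) := by nlinarith
  have hc : 0 ≤ qalg / (1 - qalg) := by positivity
  have h6 := mul_le_mul_of_nonneg_left h5 hc
  have heq : 2 * qalg / (1 - qalg) * lamalg * lamsym * η
      = qalg / (1 - qalg) * (lamalg * (2 * lamsym * η)) := by ring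
  linarith
end

section
/- Let X be a real normed vector space, u⋆ ∈ X, K ∈ ℕ, and let u⁰, u¹, …, u^K ∈ X. Let 0 < q < 1, λ > 0, and C_stab > 0, and let η : X → ℝ≥0 satisfy |η(v) − η(w)| ≤ C_stab·‖v − w‖ for all v, w ∈ X. Suppose that ‖u⋆ − u^k‖ ≤ q·‖u⋆ − u^{k−1}‖ for all 1 ≤ k ≤ K (solver contraction) and that λ·η(u^k) < ‖u^k − u^{k−1}‖ for all 1 ≤ k < K (failure of the stopping criterion before the final step). Define the quasi-error H^k := ‖u⋆ − u^k‖ + η(u^k). Then there exists a constant C > 0 depending only on q, λ, and C_stab such that H^{k'} ≤ C·q^{k'−k}·H^{k} for all 0 ≤ k ≤ k' ≤ K. -/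
/-- Contraction of the quasi-error along the iterates of a contractive solver
on a fixed mesh (Step 2 of the proof of Theorem `single:convergence`). -/
theorem quasi_error_contraction
    {X : Type*} [NormedAddCommGroup X] [NormedSpace ℝ X]
    (ustar : X) (K : ℕ) (u : ℕ → X)
    (q lam Cstab : ℝ) (hq0 : 0 < q) (hq1 : q < 1)
    (hlam : 0 < lam) (hCstab : 0 < Cstab)
    (η : X → ℝ) (hη : ∀ v, 0 ≤ η v)
    (hstab : ∀ v w : X, |η v - η w| ≤ Cstab * ‖v - w‖)
    (hcontr : ∀ k : ℕ, 1 ≤ k → k ≤ K → ‖ustar - u k‖ ≤ q * ‖ustar - u (k - 1)‖)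
    (hfail : ∀ k : ℕ, 1 ≤ k → k < K → lam * η (u k) < ‖u k - u (k - 1)‖) :
    ∃ C : ℝ, 0 < C ∧
      ∀ k k' : ℕ, k ≤ k' → k' ≤ K →
        ‖ustar - u k'‖ + η (u k')
          ≤ C * q ^ (k' - k) * (‖ustar - u k‖ + η (u k)) := by
  -- triangle inequality for consecutive iterates
  have htri : ∀ a b : ℕ, ‖u a - u b‖ ≤ ‖ustar - u a‖ + ‖ustar - u b‖ := by
    intro a b
    have : u a - u b = (ustar - u b) - (ustar - u a) := by abel
    rw [this]
    calc ‖(ustar - u b) - (ustar - u a)‖ ≤ ‖ustar - u b‖ + ‖ustar - u a‖ :=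
          norm_sub_le _ _
      _ = ‖ustar - u a‖ + ‖ustar - u b‖ := by ring
  -- geometric decay of the error
  have econ : ∀ n k : ℕ, k + n ≤ K →
      ‖ustar - u (k + n)‖ ≤ q ^ n * ‖ustar - u k‖ := by
    intro n
    induction n with
    | zero => intro k _; simp
    | succ n ih =>
      intro k hk
      have h1 := hcontr (k + n + 1) (by omega) (by omega)
      simp only [Nat.add_sub_cancel] at h1
      have h2 := ih k (by omega)
      have : ‖ustar - u (k + (n + 1))‖ = ‖ustar - u (k + n + 1)‖ := by
        norm_num [Nat.add_assoc]
      rw [this]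
      calc ‖ustar - u (k + n + 1)‖ ≤ q * ‖ustar - u (k + n)‖ := h1
        _ ≤ q * (q ^ n * ‖ustar - u k‖) := by
            nlinarith [norm_nonneg (ustar - u (k + n))]
        _ = q ^ (n + 1) * ‖ustar - u k‖ := by ring
  set C1 : ℝ := 1 + 1 / lam + 1 / (lam * q) with hC1def
  have hC1pos : (1 : ℝ) ≤ C1 := by
    have h1 : 0 < 1 / lam := by positivity
    have h2 : 0 < 1 / (lam * q) := by positivity
    simp only [hC1def]; linarith
  have hC1q : C1 * q = q + q / lam + 1 / lam := by
    have h1 : lam ≠ 0 := hlam.ne'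
    have h2 : q ≠ 0 := hq0.ne'
    simp only [hC1def]
    field_simp
  -- intermediate bound for m < K
  have midreal : ∀ k m : ℕ, k ≤ m → m < K →
      ‖ustar - u m‖ + η (u m) ≤ C1 * q ^ (m - k) * (‖ustar - u k‖ + η (u k)) := by
    intro k m hkm hmK
    rcases eq_or_lt_of_le hkm with rfl | hlt
    · -- m = k
      simp only [Nat.sub_self, pow_zero, mul_one]
      nlinarith [norm_nonneg (ustar - u k), hη (u k)]
    · -- k < m, so m ≥ 1 and the stopping criterion failed at step m
      have hm1 : 1 ≤ m := by omega
      have hf := hfail m hm1 hmK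
      have hηm : lam * η (u m) ≤ ‖ustar - u m‖ + ‖ustar - u (m - 1)‖ := by
        have := htri m (m - 1)
        linarith
      set P : ℝ := q ^ (m - 1 - k) with hP
      have hPnn : 0 ≤ P := by positivity
      have hpow : q ^ (m - k) = q * P := by
        have : m - k = (m - 1 - k) + 1 := by omega
        rw [this, pow_succ, hP]; ring
      have hem : ‖ustar - u m‖ ≤ q * P * ‖ustar - u k‖ := by
        have h := econ (m - k) k (by omega)
        have hk' : k + (m - k) = m := by omega
        rw [hk'] at h
        rw [← hpow]; exact h
      have hem1 : ‖ustar - u (m - 1)‖ ≤ P * ‖ustar - u k‖ := by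
        have h := econ (m - 1 - k) k (by omega)
        have hk' : k + (m - 1 - k) = m - 1 := by omega
        rw [hk'] at h
        exact h
      rw [hpow]
      have hek : 0 ≤ ‖ustar - u k‖ := norm_nonneg _
      have hkη : 0 ≤ η (u k) := hη (u k)
      -- reduce to polynomial inequality via hC1q
      have key : ‖ustar - u m‖ + η (u m)
          ≤ P * (q + q / lam + 1 / lam) * ‖ustar - u k‖ := by
        have hηm' : η (u m) ≤ (‖ustar - u m‖ + ‖ustar - u (m - 1)‖) / lam := by
          rw [le_div_iff₀ hlam]; nlinarith
        have h1 : ‖ustar - u m‖ / lam ≤ q * P * ‖ustar - u k‖ / lam :=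
          div_le_div_of_nonneg_right hem hlam.le
        have h2 : ‖ustar - u (m - 1)‖ / lam ≤ P * ‖ustar - u k‖ / lam :=
          div_le_div_of_nonneg_right hem1 hlam.le
        calc ‖ustar - u m‖ + η (u m)
            ≤ ‖ustar - u m‖ + (‖ustar - u m‖ + ‖ustar - u (m - 1)‖) / lam := by
              linarith
          _ = ‖ustar - u m‖ + ‖ustar - u m‖ / lam + ‖ustar - u (m - 1)‖ / lam := by
              ring
          _ ≤ q * P * ‖ustar - u k‖ + q * P * ‖ustar - u k‖ / lam
              + P * ‖ustar - u k‖ / lam := by linarith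
          _ = P * (q + q / lam + 1 / lam) * ‖ustar - u k‖ := by ring
      calc ‖ustar - u m‖ + η (u m)
          ≤ P * (q + q / lam + 1 / lam) * ‖ustar - u k‖ := key
        _ = P * (C1 * q) * ‖ustar - u k‖ := by rw [hC1q]
        _ ≤ C1 * (q * P) * (‖ustar - u k‖ + η (u k)) := by
            have hC1q' : 0 ≤ C1 * q := by positivity
            nlinarith [mul_nonneg (mul_nonneg hPnn hC1q') hkη]
  -- the final constant
  refine ⟨(1 + Cstab) * (1 + q) * C1 / q, by positivity, ?_⟩
  set C : ℝ := (1 + Cstab) * (1 + q) * C1 / q with hCdef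
  have hC1leC : C1 ≤ C := by
    rw [hCdef, le_div_iff₀ hq0]
    have hq' : q ≤ (1 + Cstab) * (1 + q) := by nlinarith
    have hC1nn : (0:ℝ) ≤ C1 := by linarith
    calc C1 * q = q * C1 := by ring
      _ ≤ ((1 + Cstab) * (1 + q)) * C1 := mul_le_mul_of_nonneg_right hq' hC1nn
      _ = (1 + Cstab) * (1 + q) * C1 := by ring
  have hC1' : (1:ℝ) ≤ C := le_trans hC1pos hC1leC
  intro k k' hkk' hk'K
  rcases eq_or_lt_of_le hkk' with rfl | hlt
  · -- k' = k : trivial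
    simp only [Nat.sub_self, pow_zero, mul_one]
    nlinarith [norm_nonneg (ustar - u k), hη (u k)]
  rcases lt_or_eq_of_le hk'K with hk'ltK | rfl
  · -- k' < K
    have h := midreal k k' (le_of_lt hlt) hk'ltK
    have hqn : (0:ℝ) ≤ q ^ (k' - k) := by positivity
    have hHk : 0 ≤ ‖ustar - u k‖ + η (u k) := by
      have := norm_nonneg (ustar - u k); have := hη (u k); linarith
    calc ‖ustar - u k'‖ + η (u k')
        ≤ C1 * q ^ (k' - k) * (‖ustar - u k‖ + η (u k)) := h
      _ ≤ C * q ^ (k' - k) * (‖ustar - u k‖ + η (u k)) := by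
          apply mul_le_mul_of_nonneg_right _ hHk
          exact mul_le_mul_of_nonneg_right hC1leC hqn
  · -- k' = K, use stability for the last step
    set m : ℕ := k' - 1 with hm
    have hkm : k ≤ m := by omega
    have hmK : m < k' := by omega
    have hmid := midreal k m hkm hmK
    -- stability: η (u k') ≤ η (u m) + Cstab * ‖u k' - u m‖
    have hsta : η (u k') ≤ η (u m) + Cstab * ‖u k' - u m‖ := by
      have h := hstab (u k') (u m)
      have := abs_le.mp h
      linarith [this.2]
    have hcon : ‖ustar - u k'‖ ≤ q * ‖ustar - u m‖ := by
      have h := hcontr k' (by omega) le_rfl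
      rw [← hm] at h; exact h
    have htri' := htri k' m
    have hem : 0 ≤ ‖ustar - u m‖ := norm_nonneg _
    have hηm : 0 ≤ η (u m) := hη (u m)
    -- H K ≤ (1+Cstab)(1+q) * H m
    have hstep : ‖ustar - u k'‖ + η (u k')
        ≤ (1 + Cstab) * (1 + q) * (‖ustar - u m‖ + η (u m)) := by
      have h1 : η (u k') ≤ η (u m) + Cstab * (‖ustar - u k'‖ + ‖ustar - u m‖) := by
        nlinarith
      nlinarith [mul_le_mul_of_nonneg_left hcon hCstab.le,
        mul_nonneg hCstab.le hηm, mul_nonneg hq0.le hηm,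
        mul_nonneg (mul_nonneg hCstab.le hq0.le) hηm]
    have hHk : 0 ≤ ‖ustar - u k‖ + η (u k) := by
      have := norm_nonneg (ustar - u k); have := hη (u k); linarith
    have hfac : 0 ≤ (1 + Cstab) * (1 + q) := by positivity
    have hpow : C * q ^ (k' - k) = (1 + Cstab) * (1 + q) * C1 * q ^ (m - k) := by
      have hnat : k' - k = (m - k) + 1 := by omega
      rw [hCdef, hnat, pow_succ]
      field_simp
    calc ‖ustar - u k'‖ + η (u k')
        ≤ (1 + Cstab) * (1 + q) * (‖ustar - u m‖ + η (u m)) := hstep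
      _ ≤ (1 + Cstab) * (1 + q) * (C1 * q ^ (m - k) * (‖ustar - u k‖ + η (u k))) :=
          mul_le_mul_of_nonneg_left hmid hfac
      _ = C * q ^ (k' - k) * (‖ustar - u k‖ + η (u k)) := by rw [hpow]; ring
end
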